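/- arXiv:2309.02880 — 13 statements merged into one kernel-verified Lean document; each statement's English description precedes it below -/
import Mathlib

section
/- Let G be a (not necessarily abelian) group equipped with a total order compatible with the group operation on both sides, and let R be a (not necessarily commutative) G-graded ring. If I is a left ideal of R whose annihilator Ann_R(I) = {r ∈ R : rI = 0} is nonzero, then there exists a nonzero homogeneous element g ∈ R such that gI = 0. -/
/-!
Take a nonzero annihilator `c` of `I` with the fewest homogeneous components and let `c_p` be
its top component. If some homogeneous `r` has `c_p r = 0` but `c r ≠ 0`, then `c r` is again a
nonzero annihilator of `I` (a left ideal), with fewer components. Otherwise `c` kills every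
homogeneous component of every `x ∈ I`: for the largest degree `j` with `c x_j ≠ 0`, the degree
`p + j` component of `c x = 0` is `c_p x_j`, because the order is compatible on both sides; so
`c_p x_j = 0` and hence `c x_j = 0`. Finally `c_p x_j` is the degree `p + j` component of
`c x_j = 0`, so `c_p I = 0`.
-/

open DirectSum

section

variable {G R σ : Type*} [Semiring R] [SetLike σ R] [AddSubmonoidClass σ R] (𝒜 : G → σ)

theorem DirectSum.coe_decompose_mul_of_right_mem_sub [AddGroup G] [DecidableEq G] [GradedRing 𝒜]
    {a b : R} {e : G} (hb : b ∈ 𝒜 e) (n : G) :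
    (decompose 𝒜 (a * b) n : R) = decompose 𝒜 a (n - e) * b := by
  rw [← coe_decompose_mul_add_of_right_mem 𝒜 hb, sub_add_cancel]

theorem DirectSum.card_support_decompose_mul_lt [AddGroup G] [DecidableEq G] [GradedRing 𝒜]
    [∀ (i) (x : 𝒜 i), Decidable (x ≠ 0)] {a b : R} {e p : G} (hb : b ∈ 𝒜 e)
    (hp : p ∈ (decompose 𝒜 a).support) (hpb : (decompose 𝒜 a p : R) * b = 0) :
    (decompose 𝒜 (a * b)).support.card < (decompose 𝒜 a).support.card := by
  have hsub : (decompose 𝒜 (a * b)).support ⊆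
      ((decompose 𝒜 a).support.erase p).image (· + e) := by
    intro n hn
    rw [GradedRing.mem_support_iff, GradedRing.proj_apply,
      coe_decompose_mul_of_right_mem_sub 𝒜 hb] at hn
    refine Finset.mem_image.2 ⟨n - e, Finset.mem_erase.2 ⟨?_, ?_⟩, sub_add_cancel n e⟩
    · rintro rfl
      exact hn hpb
    · rw [GradedRing.mem_support_iff]
      exact left_ne_zero_of_mul hn
  calc (decompose 𝒜 (a * b)).support.card
      ≤ ((decompose 𝒜 a).support.erase p).card :=
        (Finset.card_le_card hsub).trans Finset.card_image_le
    _ < (decompose 𝒜 a).support.card := Finset.card_erase_lt_of_mem hp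

theorem DirectSum.exists_top_degree [DecidableEq G] [AddMonoid G] [LinearOrder G]
    [GradedRing 𝒜] [∀ (i) (x : 𝒜 i), Decidable (x ≠ 0)] {a : R} (ha : a ≠ 0) :
    ∃ p ∈ (decompose 𝒜 a).support, ∀ i, p < i → (decompose 𝒜 a i : R) = 0 := by
  have hne : (decompose 𝒜 a).support.Nonempty := by
    refine Finset.nonempty_iff_ne_empty.2 fun h => ha ?_
    rw [← sum_support_decompose 𝒜 a, h, Finset.sum_empty]
  refine ⟨_, Finset.max'_mem _ hne, fun i hi => ?_⟩
  by_contra h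
  exact (Finset.le_max' _ i ((GradedRing.mem_support_iff 𝒜 a i).2 h)).not_gt hi

section Ordered

variable [AddGroup G] [LinearOrder G] [AddLeftMono G] [AddRightMono G] [DecidableEq G]
  [GradedRing 𝒜] {a b : R} {p : G}

theorem DirectSum.coe_decompose_mul_eq_zero_of_lt (ha : ∀ i, p < i → (decompose 𝒜 a i : R) = 0)
    {e j : G} (hb : b ∈ 𝒜 e) (hej : e < j) : (decompose 𝒜 (a * b) (p + j) : R) = 0 := by
  rw [coe_decompose_mul_of_right_mem_sub 𝒜 hb, ha _ (lt_sub_iff_add_lt.2 (add_lt_add_right hej p)),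
    zero_mul]

theorem DirectSum.mul_coe_decompose_eq_zero_of_mul_eq_zero
    (ha : ∀ i, p < i → (decompose 𝒜 a i : R) = 0)
    (hhom : ∀ d, ∀ r ∈ 𝒜 d, (decompose 𝒜 a p : R) * r = 0 → a * r = 0) (hab : a * b = 0)
    (j : G) : a * decompose 𝒜 b j = 0 := by
  classical
  by_contra hj
  set S := (decompose 𝒜 b).support.filter fun k => a * decompose 𝒜 b k ≠ 0
  have hS : ∀ k, a * decompose 𝒜 b k ≠ 0 → k ∈ S := fun k hk => Finset.mem_filter.2
    ⟨DFinsupp.mem_support_iff.2 fun h => hk (by rw [h, ZeroMemClass.coe_zero, mul_zero]), hk⟩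
  have hjS : j ∈ S := hS j hj
  set m := S.max' ⟨j, hjS⟩
  have hmS : m ∈ S := S.max'_mem _
  have htop : ∀ k, m < k → a * decompose 𝒜 b k = 0 := by
    intro k hmk
    by_contra hk
    exact (S.le_max' k (hS k hk)).not_gt hmk
  have hm : (decompose 𝒜 a p : R) * decompose 𝒜 b m = 0 := by
    have h0 := congrArg (GradedRing.proj 𝒜 (p + m)) hab
    rw [← sum_support_decompose 𝒜 b, Finset.mul_sum, map_sum, map_zero] at h0
    simp only [GradedRing.proj_apply] at h0
    rw [Finset.sum_eq_single m, coe_decompose_mul_add_of_right_mem 𝒜 (SetLike.coe_mem _)] at h0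
    · exact h0
    · intro k _ hkm
      rcases hkm.lt_or_gt with hkm | hmk
      · exact coe_decompose_mul_eq_zero_of_lt 𝒜 ha (SetLike.coe_mem _) hkm
      · rw [htop k hmk, decompose_zero]
        rfl
    · exact fun hm => absurd (Finset.mem_filter.1 hmS).1 hm
  exact (Finset.mem_filter.1 hmS).2 (hhom m _ (SetLike.coe_mem _) hm)

theorem DirectSum.coe_decompose_top_mul_eq_zero
    (ha : ∀ i, p < i → (decompose 𝒜 a i : R) = 0)
    (hhom : ∀ d, ∀ r ∈ 𝒜 d, (decompose 𝒜 a p : R) * r = 0 → a * r = 0) (hab : a * b = 0) :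
    (decompose 𝒜 a p : R) * b = 0 := by
  classical
  rw [← sum_support_decompose 𝒜 b, Finset.mul_sum]
  refine Finset.sum_eq_zero fun j _ => ?_
  rw [← coe_decompose_mul_add_of_right_mem 𝒜 (SetLike.coe_mem _),
    mul_coe_decompose_eq_zero_of_mul_eq_zero 𝒜 ha hhom hab j, decompose_zero]
  rfl

end Ordered

end

/-- Generalized zero-divisor theorem: if `I` is an unfaithful left ideal of a `G`-graded ring
`R` with `G` a totally ordered (not necessarily abelian) group, then there exists a nonzero
homogeneous element `g ∈ R` such that `g I = 0`. -/
theorem unfaithful_left_ideal_killed_by_homogeneous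
    {G : Type*} [AddGroup G] [LinearOrder G] [DecidableEq G]
    [CovariantClass G G (· + ·) (· ≤ ·)]
    [CovariantClass G G (Function.swap (· + ·)) (· ≤ ·)]
    {R : Type*} [Ring R] (𝒜 : G → AddSubgroup R) [GradedRing 𝒜]
    (I : Ideal R) (h : ∃ c : R, c ≠ 0 ∧ ∀ x ∈ I, c * x = 0) :
    ∃ g : R, g ≠ 0 ∧ SetLike.IsHomogeneousElem 𝒜 g ∧ ∀ x ∈ I, g * x = 0 := by
  classical
  obtain ⟨c, hc, hcI⟩ := h
  induction hn : (decompose 𝒜 c).support.card using Nat.strong_induction_on generalizing c with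
  | _ n ih =>
  obtain ⟨p, hp, htop⟩ := exists_top_degree 𝒜 hc
  by_cases hhom : ∀ d, ∀ r ∈ 𝒜 d, (decompose 𝒜 c p : R) * r = 0 → c * r = 0
  · refine ⟨decompose 𝒜 c p, (GradedRing.mem_support_iff 𝒜 c p).1 hp, ⟨p, SetLike.coe_mem _⟩,
      fun x hx => coe_decompose_top_mul_eq_zero 𝒜 htop hhom (hcI x hx)⟩
  · obtain ⟨d, r, hr, hpr, hcr⟩ : ∃ d, ∃ r ∈ 𝒜 d, (decompose 𝒜 c p : R) * r = 0 ∧ c * r ≠ 0 := by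
      simpa only [not_forall, exists_prop] using hhom
    exact ih _ (hn ▸ card_support_decompose_mul_lt 𝒜 hr hp hpr) (c * r) hcr
      (fun x hx => by rw [mul_assoc]; exact hcI _ (I.mul_mem_left r hx)) rfl
end

section
/- Let G be a torsion-free abelian group and let R be a G-graded commutative ring. If I is a graded proper ideal of R with the property that whenever rr' ∈ I for homogeneous elements r, r' ∈ R one has r ∈ I or r' ∈ I, then I is a prime ideal of R. -/
/-!
A torsion-free abelian group `G` is linearly orderable (Levi): it embeds in its divisible hull, a
`ℚ`-vector space, and the lexicographic order on coordinates with respect to a basis indexed by a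
well-ordered set is translation invariant. Once the grading is linearly ordered, the classical
argument applies: if `x, y ∉ I` and `xᵢ`, `yⱼ` are their components of largest degree not in `I`,
then the degree `i + j` component of `x * y` is `xᵢ * yⱼ` modulo `I`, so `x * y ∉ I`.
-/

theorem AddCommGroup.isAddTorsionFree_of_nsmul_eq_zero {G : Type*} [AddCommGroup G]
    (h : ∀ (n : ℕ) (x : G), n ≠ 0 → n • x = 0 → x = 0) : IsAddTorsionFree G where
  nsmul_right_injective n hn x y hxy := sub_eq_zero.1 <| h n _ hn <| by
    simpa [nsmul_sub, sub_eq_zero] using hxy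

theorem AddCommGroup.exists_linearOrder_isOrderedCancelAddMonoid (G : Type*) [AddCommGroup G]
    [IsAddTorsionFree G] : ∃ _ : LinearOrder G, IsOrderedCancelAddMonoid G := by
  let ι := Module.Free.ChooseBasisIndex ℚ (DivisibleHull G)
  let _ : LinearOrder ι := IsWellOrder.linearOrder WellOrderingRel
  let f : G →+ Lex (ι →₀ ℚ) := (toLexAddEquiv _).toAddMonoidHom.comp <|
    (Module.Free.chooseBasis ℚ _).repr.toAddMonoidHom.comp (DivisibleHull.coeAddMonoidHom G)
  have hf : Function.Injective f :=
    toLex.injective.comp <| (LinearEquiv.injective _).comp DivisibleHull.coe_injective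
  let _ := LinearOrder.lift' f hf
  exact ⟨_, Function.Injective.isOrderedCancelAddMonoid f (map_add f) Iff.rfl⟩

/-- If `I` is a graded proper ideal of a `G`-graded commutative ring, with `G` a torsion-free
abelian group, such that whenever a product of homogeneous elements lies in `I` one of the
factors lies in `I`, then `I` is a prime ideal. -/
theorem graded_ideal_homogeneous_prime_condition_isPrime
    {G : Type*} [AddCommGroup G] [DecidableEq G]
    (hG : ∀ (n : ℕ) (x : G), n ≠ 0 → n • x = 0 → x = 0)
    {R : Type*} [CommRing R] (𝒜 : G → AddSubgroup R) [GradedRing 𝒜]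
    (I : Ideal R) (hI : Ideal.IsHomogeneous 𝒜 I) (hIproper : I ≠ ⊤)
    (hmul : ∀ r r' : R, SetLike.IsHomogeneousElem 𝒜 r → SetLike.IsHomogeneousElem 𝒜 r' →
      r * r' ∈ I → r ∈ I ∨ r' ∈ I) :
    I.IsPrime := by
  have := AddCommGroup.isAddTorsionFree_of_nsmul_eq_zero hG
  obtain ⟨_, _⟩ := AddCommGroup.exists_linearOrder_isOrderedCancelAddMonoid G
  -- The grading is stated with the given `DecidableEq G`, Mathlib's lemma with the order's.
  obtain rfl : ‹DecidableEq G› = fun a b => LinearOrder.toDecidableEq a b := Subsingleton.elim _ _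
  exact hI.isPrime_of_homogeneous_mem_or_mem hIproper fun hx hy => hmul _ _ hx hy
end

section
/- Let G be a torsion-free abelian group and let R be a G-graded commutative ring. If 𝔭 is a prime ideal of R, then 𝔭*, the ideal of R generated by all homogeneous elements of R contained in 𝔭 (equivalently, the largest graded ideal of R contained in 𝔭), is a prime ideal of R. -/
/-!
A torsion-free abelian group embeds into its divisible hull, a `ℚ`-vector space; a basis of the
latter, indexed by a well-ordered set `ι`, embeds it further into the lexicographically ordered
group `Lex (ι →₀ ℚ)`. Pulling this order back makes the grading group a linearly ordered
cancellative monoid, and over such a grading the homogeneous core of a prime ideal is prime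
(`Ideal.IsPrime.homogeneousCore`): compare the leading homogeneous components of a product.
-/

open Function

universe u

theorem IsAddTorsionFree.of_nsmul_eq_zero {G : Type*} [AddCommGroup G]
    (hG : ∀ (n : ℕ) (x : G), n ≠ 0 → n • x = 0 → x = 0) : IsAddTorsionFree G :=
  ⟨fun n hn a b hab ↦ sub_eq_zero.1 <| hG n _ hn <| by simp only [nsmul_sub, hab, sub_self]⟩

theorem IsAddTorsionFree.exists_injective_addMonoidHom_lex {G : Type u} [AddCommGroup G]
    [IsAddTorsionFree G] :
    ∃ (ι : Type u) (_ : LinearOrder ι) (f : G →+ Lex (ι →₀ ℚ)), Injective f := by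
  let b := Module.Basis.ofVectorSpace ℚ (DivisibleHull G)
  let : LinearOrder (Module.Basis.ofVectorSpaceIndex ℚ (DivisibleHull G)) :=
    IsWellOrder.linearOrder WellOrderingRel
  refine ⟨_, this, (toLexAddEquiv _).toAddMonoidHom.comp <|
    b.repr.toAddMonoidHom.comp (DivisibleHull.coeAddMonoidHom G), ?_⟩
  exact toLex.injective.comp (b.repr.injective.comp DivisibleHull.coe_injective)

theorem Ideal.IsPrime.homogeneousCore_of_injective {ι : Type*} [AddCommMonoid ι] [DecidableEq ι]
    {L : Type*} [AddCommMonoid L] [LinearOrder L] [IsOrderedCancelAddMonoid L]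
    (f : ι →+ L) (hf : Injective f)
    {R : Type*} [CommRing R] (𝒜 : ι → AddSubgroup R) [GradedRing 𝒜]
    {𝔭 : Ideal R} (h𝔭 : 𝔭.IsPrime) :
    (Ideal.homogeneousCore 𝒜 𝔭).toIdeal.IsPrime := by
  let : LinearOrder ι := LinearOrder.lift' f hf
  have : IsOrderedCancelAddMonoid ι :=
    Function.Injective.isOrderedCancelAddMonoid f (map_add f) .rfl
  -- `GradedRing 𝒜` depends on the `DecidableEq ι` instance, which must first be identified
  -- with the one carried by the pulled-back order.
  revert ‹GradedRing 𝒜›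
  obtain rfl : ‹DecidableEq ι› = LinearOrder.toDecidableEq := Subsingleton.elim _ _
  intro _
  exact h𝔭.homogeneousCore

/-- If `𝔭` is a prime ideal of a `G`-graded commutative ring with `G` a torsion-free abelian
group, then `𝔭*` (the largest graded ideal contained in `𝔭`) is a prime ideal. -/
theorem homogeneousCore_isPrime
    {G : Type*} [AddCommGroup G] [DecidableEq G]
    (hG : ∀ (n : ℕ) (x : G), n ≠ 0 → n • x = 0 → x = 0)
    {R : Type*} [CommRing R] (𝒜 : G → AddSubgroup R) [GradedRing 𝒜]
    (𝔭 : Ideal R) (h𝔭 : 𝔭.IsPrime) :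
    (Ideal.homogeneousCore 𝒜 𝔭).toIdeal.IsPrime := by
  have := IsAddTorsionFree.of_nsmul_eq_zero hG
  obtain ⟨_, _, f, hf⟩ := IsAddTorsionFree.exists_injective_addMonoidHom_lex (G := G)
  exact h𝔭.homogeneousCore_of_injective f hf 𝒜
end

section
/- Let M be a totally ordered cancellative commutative monoid and let R be an M-graded commutative ring. If f is a zero-divisor element of R (i.e., gf = 0 for some nonzero g ∈ R), then there exists a nonzero homogeneous element g ∈ R such that gf = 0. -/
/-!
Choose `g ≠ 0` with `g * f = 0` whose homogeneous decomposition has the fewest nonzero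
components. Every homogeneous component `fᵢ` of `f` then kills `g`: otherwise take the largest
such `i`, and comparing degrees in `g * f = 0` shows that the top component `gₘ` of `g` kills `fᵢ`,
so `fᵢ * g` is a nonzero annihilator of `f` with fewer components than `g`. Since `fᵢ` is
homogeneous, `fᵢ * g = 0` forces `fᵢ * gⱼ = 0` for every `j`, hence `gₘ * f = 0`.
-/

open DirectSum Finset

namespace DirectSum

variable {ι R σ : Type*} [DecidableEq ι] [SetLike σ R]

open scoped Classical in
theorem support_decompose_nonempty [AddCommMonoid R] [AddSubmonoidClass σ R] (𝒜 : ι → σ)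
    [Decomposition 𝒜] {g : R} (hg : g ≠ 0) : (decompose 𝒜 g).support.Nonempty := by
  rw [nonempty_iff_ne_empty, Ne, DFinsupp.support_eq_empty, ← decompose_zero 𝒜]
  exact (decompose 𝒜).injective.ne hg

section Semiring

variable [Semiring R] [AddSubmonoidClass σ R] (𝒜 : ι → σ)

theorem mul_coe_decompose_eq_zero_of_mem [AddMonoid ι] [IsLeftCancelAdd ι] [GradedRing 𝒜]
    {a b : R} {i : ι} (ha : a ∈ 𝒜 i) (h : a * b = 0) (j : ι) :
    a * (decompose 𝒜 b j : R) = 0 := by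
  let _ : AddLeftCancelMonoid ι := { ‹AddMonoid ι›, ‹IsLeftCancelAdd ι› with }
  rw [← coe_decompose_mul_add_of_left_mem 𝒜 ha, h, decompose_zero]
  rfl

open scoped Classical in
theorem support_decompose_mul_subset [AddMonoid ι] [GradedRing 𝒜] {a : R} {i : ι}
    (ha : a ∈ 𝒜 i) (b : R) :
    (decompose 𝒜 (a * b)).support ⊆
      {j ∈ (decompose 𝒜 b).support | a * decompose 𝒜 b j ≠ 0}.image (i + ·) := by
  intro n hn
  rw [DFinsupp.mem_support_iff, ← sum_support_decompose 𝒜 b, mul_sum, decompose_sum,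
    DFinsupp.finsetSum_apply] at hn
  obtain ⟨j, hj, hne⟩ := exists_ne_zero_of_sum_ne_zero hn
  have hmem : a * decompose 𝒜 b j ∈ 𝒜 (i + j) := SetLike.mul_mem_graded ha (SetLike.coe_mem _)
  have hij : i + j = n := by
    by_contra h
    exact hne (Subtype.ext (decompose_of_mem_ne 𝒜 hmem h))
  refine mem_image.2 ⟨j, mem_filter.2 ⟨hj, fun h0 => hne ?_⟩, hij⟩
  simp [h0]

end Semiring

section LinearOrder

variable [CommSemiring R] [AddSubmonoidClass σ R] (𝒜 : ι → σ)
variable [AddCommMonoid ι] [LinearOrder ι] [IsOrderedCancelAddMonoid ι] [GradedRing 𝒜]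

open scoped Classical in
theorem coe_decompose_mul_coe_decompose_eq_zero {f g : R} (hgf : g * f = 0) {m i : ι}
    (hm : ∀ j ∈ (decompose 𝒜 g).support, j ≤ m)
    (hi : ∀ k, i < k → (decompose 𝒜 f k : R) * g = 0) :
    (decompose 𝒜 g m : R) * decompose 𝒜 f i = 0 := by
  have h0 : (decompose 𝒜 (g * f) (m + i) : R) = 0 := by simp [hgf]
  rw [decompose_mul, coe_mul_apply] at h0
  rw [← h0, eq_comm]
  refine sum_eq_single (m, i) (fun ⟨j, k⟩ hjk hne => ?_) (fun hmi => ?_)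
  · simp only [mem_filter, mem_product] at hjk
    obtain ⟨⟨hj, -⟩, hsum⟩ := hjk
    rcases lt_trichotomy i k with hik | rfl | hki
    · rw [mul_comm]
      exact mul_coe_decompose_eq_zero_of_mem 𝒜 (SetLike.coe_mem _) (hi k hik) j
    · exact absurd (by rw [add_right_cancel hsum]) hne
    · exact absurd hsum (add_lt_add_of_le_of_lt (hm j hj) hki).ne
  · simp only [mem_filter, mem_product, DFinsupp.mem_support_iff, not_and_or, not_not] at hmi
    rcases hmi with (h | h) | h <;> simp_all

open scoped Classical in
theorem coe_decompose_mul_eq_zero_of_card_support_minimal {f g : R} (hg : g ≠ 0)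
    (hgf : g * f = 0)
    (hmin : ∀ g', g' ≠ 0 → g' * f = 0 → #(decompose 𝒜 g).support ≤ #(decompose 𝒜 g').support)
    (i : ι) : (decompose 𝒜 f i : R) * g = 0 := by
  revert i
  by_contra! hbad
  set S := {k ∈ (decompose 𝒜 f).support | (decompose 𝒜 f k : R) * g ≠ 0}
  have hS : S.Nonempty := by
    obtain ⟨k, hk⟩ := hbad
    exact ⟨k, mem_filter.2 ⟨DFinsupp.mem_support_iff.2 fun h => hk (by simp [h]), hk⟩⟩
  set i := S.max' hS
  have hi : (decompose 𝒜 f i : R) * g ≠ 0 := (mem_filter.1 (S.max'_mem hS)).2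
  have habove : ∀ k, i < k → (decompose 𝒜 f k : R) * g = 0 := by
    intro k hik
    by_contra hk
    have hkS : k ∈ S := mem_filter.2 ⟨DFinsupp.mem_support_iff.2 fun h => hk (by simp [h]), hk⟩
    exact (S.le_max' k hkS).not_gt hik
  set m := (decompose 𝒜 g).support.max' (support_decompose_nonempty 𝒜 hg)
  have hm : (decompose 𝒜 f i : R) * decompose 𝒜 g m = 0 := by
    rw [mul_comm]
    exact coe_decompose_mul_coe_decompose_eq_zero 𝒜 hgf (fun j => le_max' _ j) habove
  have hfewer : #(decompose 𝒜 ((decompose 𝒜 f i : R) * g)).support < #(decompose 𝒜 g).support :=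
    calc _ ≤ #{j ∈ (decompose 𝒜 g).support | (decompose 𝒜 f i : R) * decompose 𝒜 g j ≠ 0} :=
          (card_le_card (support_decompose_mul_subset 𝒜 (SetLike.coe_mem _) g)).trans
            card_image_le
      _ ≤ #((decompose 𝒜 g).support.erase m) :=
          card_le_card fun j hj => mem_erase.2
            ⟨fun hjm => (mem_filter.1 hj).2 (hjm ▸ hm), (mem_filter.1 hj).1⟩
      _ < _ := card_erase_lt_of_mem (max'_mem _ _)
  exact (hmin _ hi (by rw [mul_assoc, hgf, mul_zero])).not_gt hfewer

end LinearOrder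

end DirectSum

/-- If `f` is a zero-divisor of an `M`-graded commutative ring with `M` a totally ordered
cancellative commutative monoid, then `f` is annihilated by some nonzero homogeneous element. -/
theorem zeroDivisor_killed_by_homogeneous
    {M : Type*} [AddCommMonoid M] [LinearOrder M] [IsOrderedCancelAddMonoid M] [DecidableEq M]
    {R : Type*} [CommRing R] (𝒜 : M → AddSubgroup R) [GradedRing 𝒜]
    (f : R) (hf : ∃ g : R, g ≠ 0 ∧ g * f = 0) :
    ∃ g : R, g ≠ 0 ∧ SetLike.IsHomogeneousElem 𝒜 g ∧ g * f = 0 := by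
  classical
  obtain ⟨g, ⟨hg, hgf⟩, hmin⟩ := (measure fun g : R => #(decompose 𝒜 g).support).wf.has_min
    {g | g ≠ 0 ∧ g * f = 0} hf
  have hkill := coe_decompose_mul_eq_zero_of_card_support_minimal 𝒜 hg hgf
    fun g' hg' hg'f => not_lt.1 (hmin g' ⟨hg', hg'f⟩)
  obtain ⟨m, hm⟩ := support_decompose_nonempty 𝒜 hg
  refine ⟨decompose 𝒜 g m, fun h => DFinsupp.mem_support_iff.1 hm (Subtype.ext h),
    ⟨m, SetLike.coe_mem _⟩, ?_⟩
  rw [← sum_support_decompose 𝒜 f, mul_sum]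
  refine sum_eq_zero fun k _ => ?_
  rw [mul_comm]
  exact mul_coe_decompose_eq_zero_of_mem 𝒜 (SetLike.coe_mem _) (hkill k) m
end

section
/- Let R be a (not necessarily commutative) ring and M a totally ordered cancellative commutative monoid. If I is a left ideal of the monoid-ring R[M] whose annihilator is nonzero, then there exists a nonzero element a ∈ R such that (a ε_0) · I = 0, where 0 is the identity of M. -/
/-! Among the nonzero annihilators of `I` pick `c` with the fewest monomials, of top degree `m`.
Since `I` is a left ideal, `c * r` annihilates `I` for every `r ∈ R`; its support lies in that
of `c`, so minimality forces `c * r = 0` as soon as `c_m * r = 0`. If `x ∈ I` has top term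
`r ε_n`, the coefficient of `c * x = 0` at `m + n` is `c_m * r`, hence `c * r ε_n = 0`, and
peeling off top terms shows that every coefficient of `c` kills every coefficient of `x`.
So `a = c_m` works. -/

namespace AddMonoidAlgebra

variable {R M : Type*} [Semiring R]

theorem induction_on_max [LinearOrder M] {motive : AddMonoidAlgebra R M → Prop}
    (x : AddMonoidAlgebra R M) (zero : motive 0)
    (single_add : ∀ m r (y : AddMonoidAlgebra R M), (∀ q ∈ y.coeff.support, q < m) → r ≠ 0 →
      motive y → motive (single m r + y)) : motive x :=
  Finsupp.induction_on_max (motive := fun f => motive (ofCoeff f)) x.coeff zero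
    fun m r f hf hr h => single_add m r (ofCoeff f) hf hr h

theorem exists_mem_ne_zero_mul_single_zero_eq_zero_of_coeff_mul_eq_zero [AddZeroClass M]
    {S : Set (AddMonoidAlgebra R M)} (hS : ∀ c ∈ S, ∀ r, c * single 0 r ∈ S)
    (hne : ∃ c ∈ S, c ≠ 0) :
    ∃ c ∈ S, c ≠ 0 ∧ ∀ m ∈ c.coeff.support, ∀ r, c.coeff m * r = 0 → c * single 0 r = 0 := by
  obtain ⟨c, ⟨hcS, hc0⟩, hmin⟩ :=
    (measure fun c : AddMonoidAlgebra R M => c.coeff.support.card).wf.has_min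
      {c | c ∈ S ∧ c ≠ 0} hne
  refine ⟨c, hcS, hc0, fun m hm r hmr => ?_⟩
  by_contra hcr
  refine hmin _ ⟨hS c hcS r, hcr⟩ (Finset.card_lt_card ?_)
  refine Finset.ssubset_iff_of_subset (fun p hp => ?_) |>.2 ⟨m, hm, ?_⟩
  · rw [Finsupp.mem_support_iff, coeff_mul_single_zero] at hp
    exact Finsupp.mem_support_iff.2 (left_ne_zero_of_mul hp)
  · rwa [Finsupp.mem_support_iff, coeff_mul_single_zero, not_not]

section Ordered

variable [AddCommMonoid M] [LinearOrder M] [IsOrderedCancelAddMonoid M]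

theorem coeff_mul_add_of_forall_le {c x : AddMonoidAlgebra R M} {m n : M}
    (hm : ∀ p ∈ c.coeff.support, p ≤ m) (hn : ∀ q ∈ x.coeff.support, q ≤ n) :
    (c * x).coeff (m + n) = c.coeff m * x.coeff n :=
  coeff_mul_add_of_uniqueAdd fun _ _ hp hq h =>
    (add_eq_add_iff_eq_and_eq (hm _ hp) (hn _ hq)).1 h

theorem coeff_mul_coeff_eq_zero_of_mul_eq_zero {c x : AddMonoidAlgebra R M} {m : M}
    (hm : ∀ p ∈ c.coeff.support, p ≤ m)
    (hc : ∀ r, c.coeff m * r = 0 → c * single 0 r = 0) (hcx : c * x = 0) (p q : M) :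
    c.coeff p * x.coeff q = 0 := by
  induction x using induction_on_max generalizing q with
  | zero => rw [coeff_zero, Finsupp.zero_apply, mul_zero]
  | single_add n r y hy _ ih =>
    have hyn : y.coeff n = 0 := Finsupp.notMem_support_iff.1 fun h => (hy n h).false
    have hle : ∀ q ∈ (single n r + y).coeff.support, q ≤ n := by
      intro q hq
      rcases Finset.mem_union.1 (Finsupp.support_add hq) with hq | hq
      · exact (Finset.mem_singleton.1 (Finsupp.support_single_subset hq)).le
      · exact (hy q hq).le
    have hcr : c * single 0 r = 0 := by
      refine hc r ?_
      have := congr(($hcx).coeff (m + n))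
      rwa [coeff_mul_add_of_forall_le hm hle, coeff_add, Finsupp.add_apply, hyn, add_zero,
        coeff_single, Finsupp.single_eq_same] at this
    have hcy : c * y = 0 := by
      rwa [mul_add, ← zero_add n, ← mul_one r, ← single_mul_single, ← mul_assoc, hcr, zero_mul,
        zero_add] at hcx
    rw [coeff_add, Finsupp.add_apply, mul_add, ih hcy q, add_zero, coeff_single,
      Finsupp.single_apply]
    split_ifs
    · rw [← coeff_mul_single_zero, hcr, coeff_zero, Finsupp.zero_apply]
    · rw [mul_zero]

end Ordered

end AddMonoidAlgebra

/-- If `I` is an unfaithful left ideal of the monoid-ring `R[M]` with `M` a totally ordered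
cancellative commutative monoid, then `a I = 0` for some nonzero `a ∈ R` (viewed as the
element `a ε₀` of `R[M]`). -/
theorem monoidAlgebra_unfaithful_left_ideal_killed_by_scalar
    {R : Type*} [Ring R] {M : Type*} [AddCommMonoid M] [LinearOrder M] [IsOrderedCancelAddMonoid M]
    (I : Ideal (AddMonoidAlgebra R M))
    (h : ∃ c : AddMonoidAlgebra R M, c ≠ 0 ∧ ∀ x ∈ I, c * x = 0) :
    ∃ a : R, a ≠ 0 ∧ ∀ x ∈ I, AddMonoidAlgebra.single (0 : M) a * x = 0 := by
  obtain ⟨c, hcI, hc0, hc⟩ :=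
    AddMonoidAlgebra.exists_mem_ne_zero_mul_single_zero_eq_zero_of_coeff_mul_eq_zero
      (S := {c | ∀ x ∈ I, c * x = 0})
      (fun c hc r x hx => by rw [mul_assoc]; exact hc _ (I.mul_mem_left _ hx))
      (h.imp fun _ hc => ⟨hc.2, hc.1⟩)
  have hsupp : c.coeff.support.Nonempty :=
    Finsupp.support_nonempty_iff.2 (AddMonoidAlgebra.coeff_eq_zero.not.2 hc0)
  have hm := c.coeff.support.max'_mem hsupp
  refine ⟨_, Finsupp.mem_support_iff.1 hm, fun x hx => ?_⟩
  ext q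
  rw [AddMonoidAlgebra.coeff_single_zero_mul, AddMonoidAlgebra.coeff_zero, Finsupp.zero_apply]
  exact AddMonoidAlgebra.coeff_mul_coeff_eq_zero_of_mul_eq_zero
    (fun p hp => c.coeff.support.le_max' p hp) (hc _ hm) (hcI x hx) _ q
end

section
/- Let R be a (not necessarily commutative) ring and S an arbitrary index set. If I is a left ideal of the polynomial ring R[x_k : k ∈ S] — realized as the monoid-ring of R over the free commutative monoid ⊕_{k∈S} ℕ of finitely supported functions S → ℕ — whose annihilator is nonzero, then there exists a nonzero element a ∈ R such that a · I = 0 (a acting as the constant polynomial a). -/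
/-!
Well-order `S`, so that monomials are totally ordered (lexicographically) compatibly with
multiplication, and pick a nonzero annihilator `c` of `I` with the fewest monomials; let `c_m` be
its top coefficient. If `c_m r = 0`, then `c r` still annihilates `I` (a left ideal) and has fewer
monomials, so `c r = 0`. Now let `x ∈ I` and let `b X^a` be its top term: the coefficient of
`c x = 0` at `m + a` is `c_m b`, so `c b = 0`, and `x - b X^a` is again killed by `c`. Descending
through the terms of `x`, `c_m` kills every coefficient of `x`.
-/

open Finset

theorem UniqueAdd.of_forall_le {M : Type*} [AddCommMonoid M] [LinearOrder M]
    [IsOrderedCancelAddMonoid M] {A B : Finset M} {a b : M}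
    (hA : ∀ i ∈ A, i ≤ a) (hB : ∀ j ∈ B, j ≤ b) : UniqueAdd A B a b := by
  intro i j hi hj hij
  obtain rfl : i = a := (hA i hi).eq_of_not_lt fun hlt ↦
    (add_lt_add_of_lt_of_le hlt (hB j hj)).ne hij
  exact ⟨rfl, add_left_cancel hij⟩

namespace AddMonoidAlgebra

variable {R M : Type*} [Semiring R]

theorem mul_single_zero_eq_zero_of_coeff_mul_eq_zero [AddMonoid M]
    {I : Ideal (AddMonoidAlgebra R M)} {c : AddMonoidAlgebra R M} (hc : c ∈ I.annihilator)
    (hmin : ∀ c' ∈ I.annihilator, #c'.coeff.support < #c.coeff.support → c' = 0)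
    {m : M} (hm : m ∈ c.coeff.support) {r : R} (hr : c.coeff m * r = 0) :
    c * single 0 r = 0 := by
  refine hmin _ (Ideal.mul_mem_right _ _ hc) (card_lt_card ?_)
  refine ssubset_iff_of_subset (fun i hi ↦ ?_) |>.2 ⟨m, hm, ?_⟩
  · rw [Finsupp.mem_support_iff, coeff_mul_single_zero] at hi
    exact Finsupp.mem_support_iff.2 (left_ne_zero_of_mul hi)
  · rwa [Finsupp.notMem_support_iff, coeff_mul_single_zero]

variable [AddCommMonoid M] [LinearOrder M] [IsOrderedCancelAddMonoid M]

theorem coeff_mul_add_of_forall_le_s7 {p q : AddMonoidAlgebra R M} {a b : M}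
    (hp : ∀ i ∈ p.coeff.support, i ≤ a) (hq : ∀ j ∈ q.coeff.support, j ≤ b) :
    (p * q).coeff (a + b) = p.coeff a * q.coeff b :=
  coeff_mul_add_of_uniqueAdd (.of_forall_le hp hq)

theorem mul_single_zero_coeff_eq_zero {c x : AddMonoidAlgebra R M} {m : M}
    (hm : ∀ i ∈ c.coeff.support, i ≤ m)
    (hc : ∀ r, c.coeff m * r = 0 → c * single 0 r = 0) (hx : c * x = 0) (j : M) :
    c * single 0 (x.coeff j) = 0 := by
  classical
  obtain ⟨f, rfl⟩ : ∃ f, ofCoeff f = x := ⟨x.coeff, rfl⟩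
  induction f using Finsupp.induction_on_max generalizing j with
  | zero => simp
  | single_add a b f hfa _ ih =>
    have hb : c * single 0 b = 0 := hc b <| by
      have hle : ∀ k ∈ (Finsupp.single a b + f).support, k ≤ a := fun k hk ↦ by
        rcases mem_union.1 (Finsupp.support_add hk) with hk | hk
        exacts [(mem_singleton.1 (Finsupp.support_single_subset hk)).le, (hfa k hk).le]
      have := congr_arg (coeff · (m + a)) hx
      rw [coeff_mul_add_of_forall_le_s7 hm hle] at this
      simpa [Finsupp.notMem_support_iff.1 fun h ↦ (hfa a h).false] using this
    have hab : c * single a b = 0 := by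
      rw [← zero_add a, ← mul_one b, ← single_mul_single, ← mul_assoc, hb, zero_mul]
    have hf : c * ofCoeff f = 0 := by
      rwa [ofCoeff_add, mul_add, ofCoeff_single, hab, zero_add] at hx
    simp only [Finsupp.add_apply, single_add, mul_add, ih _ hf, add_zero, Finsupp.single_apply]
    split_ifs <;> simp [hb]

theorem exists_single_zero_mem_annihilator (I : Ideal (AddMonoidAlgebra R M))
    (hI : I.annihilator ≠ ⊥) : ∃ a : R, a ≠ 0 ∧ single 0 a ∈ I.annihilator := by
  obtain ⟨c, ⟨hc, hc0⟩, hc_min⟩ := WellFounded.has_min (measure fun c : AddMonoidAlgebra R M ↦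
    #c.coeff.support).wf {c | c ∈ I.annihilator ∧ c ≠ 0} ((Submodule.ne_bot_iff _).1 hI)
  have hmin : ∀ c' ∈ I.annihilator, #c'.coeff.support < #c.coeff.support → c' = 0 :=
    fun c' hc' hlt ↦ by_contra fun h ↦ hc_min c' ⟨hc', h⟩ hlt
  have hne : c.coeff.support.Nonempty := by simpa using hc0
  set m := c.coeff.support.max' hne
  have hm : m ∈ c.coeff.support := c.coeff.support.max'_mem hne
  refine ⟨c.coeff m, Finsupp.mem_support_iff.1 hm, Submodule.mem_annihilator.2 fun x hx ↦ ?_⟩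
  ext j
  have := mul_single_zero_coeff_eq_zero (c.coeff.support.le_max' · ·)
    (fun r ↦ mul_single_zero_eq_zero_of_coeff_mul_eq_zero hc hmin hm)
    (Submodule.mem_annihilator.1 hc x hx) j
  simpa [coeff_single_zero_mul, coeff_mul_single_zero] using congr_arg (coeff · m) this

end AddMonoidAlgebra

/-- McCoy's theorem for left ideals in many variables: if `I` is an unfaithful left ideal of
the polynomial ring `R[x_k : k ∈ S]` (realized as the monoid-ring of `R` over the free
commutative monoid `⊕_{k ∈ S} ℕ` of finitely supported functions `S → ℕ`), then `a I = 0`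
for some nonzero `a ∈ R` (acting as the constant polynomial `a ε₀`). -/
theorem polynomialRing_unfaithful_left_ideal_killed_by_scalar
    {R : Type*} [Ring R] {S : Type*}
    (I : Ideal (AddMonoidAlgebra R (S →₀ ℕ)))
    (h : ∃ c : AddMonoidAlgebra R (S →₀ ℕ), c ≠ 0 ∧ ∀ x ∈ I, c * x = 0) :
    ∃ a : R, a ≠ 0 ∧ ∀ x ∈ I, AddMonoidAlgebra.single (0 : S →₀ ℕ) a * x = 0 := by
  let : LinearOrder S := IsWellOrder.linearOrder WellOrderingRel
  have hI : I.annihilator ≠ ⊥ := by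
    obtain ⟨c, hc0, hc⟩ := h
    exact (Submodule.ne_bot_iff _).2 ⟨c, Submodule.mem_annihilator.2 hc, hc0⟩
  obtain ⟨a, ha, haI⟩ :=
    AddMonoidAlgebra.exists_single_zero_mem_annihilator (M := Lex (S →₀ ℕ)) I hI
  exact ⟨a, ha, Submodule.mem_annihilator.1 haI⟩
end

section
/- Let M be a commutative monoid, let M̃ = {x ∈ M : there exist an integer n ≥ 1 and y ∈ M with n·x + y = y} (the quasi-torsion submonoid of M), and let R = ⊕_{m∈M} R_m be an M-graded commutative ring. Then every idempotent element of R is contained in the subring ⊕_{m∈M̃} R_m. -/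
/-!
If `m` is not quasi-torsion, its class in `ℚ ⊗ K₀(M)` (with `K₀(M)` the Grothendieck group) is
nonzero, so some `θ : M →+ ℚ` has `θ m ≠ 0`. The grading and `θ` give a ring homomorphism
`R → R[ℚ]`, `r ↦ ∑ᵢ single (θ i) rᵢ`. Over a domain `K`, `K[ℚ]` is a domain, so its idempotents
are `0` and `1`; reducing modulo every prime of `R`, an idempotent `F` of `R[ℚ]` has nilpotent
coefficients away from degree `0`. Then `F` differs by a nilpotent from the idempotent obtained by
moving all its coefficients to degree `0`, so the two are equal. Hence the `θ m`-coefficient of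
the image of `e` vanishes, and the degree-`m` component of that coefficient is `eₘ`.
-/

open AddMonoidAlgebra DirectSum TensorProduct

lemma Algebra.GrothendieckAddGroup.of_eq_zero_iff {M : Type*} [AddCommMonoid M] {x : M} :
    of x = 0 ↔ ∃ y : M, x + y = y := by
  rw [← map_zero of]
  exact (AddLocalization.addMonoidOf ⊤).eq_iff_exists.trans (by simp [add_comm])

lemma exists_addMonoidHom_rat_ne_zero {M : Type*} [AddCommMonoid M] {m : M}
    (hm : ¬ ∃ n : ℕ, 1 ≤ n ∧ ∃ y : M, n • m + y = y) : ∃ θ : M →+ ℚ, θ m ≠ 0 := by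
  let G := Algebra.GrothendieckAddGroup M
  let ι : G →ₗ[ℤ] ℚ ⊗[ℤ] G := TensorProduct.mk ℤ ℚ G 1
  have : IsLocalizedModule (nonZeroDivisors ℤ) ι :=
    (isLocalizedModule_iff_isBaseChange _ ℚ ι).mpr (TensorProduct.isBaseChange ℤ G ℚ)
  have hι : ι (Algebra.GrothendieckAddGroup.of m) ≠ 0 := by
    rw [Ne, IsLocalizedModule.eq_zero_iff (nonZeroDivisors ℤ)]
    rintro ⟨⟨k, hk⟩, hkm⟩
    refine hm ⟨k.natAbs, Int.natAbs_pos.mpr (nonZeroDivisors.ne_zero hk), ?_⟩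
    rw [← Algebra.GrothendieckAddGroup.of_eq_zero_iff, map_nsmul, natAbs_nsmul_eq_zero]
    exact hkm
  obtain ⟨φ, hφ⟩ := not_forall.mp (mt (Module.forall_dual_apply_eq_zero_iff ℚ _).mp hι)
  exact ⟨(φ.toAddMonoidHom.comp ι.toAddMonoidHom).comp Algebra.GrothendieckAddGroup.of, hφ⟩

namespace AddMonoidAlgebra

lemma isNilpotent_single {R Γ : Type*} [Semiring R] [AddMonoid Γ] {r : R} (hr : IsNilpotent r)
    (γ : Γ) : IsNilpotent (single γ r) := by
  obtain ⟨n, hn⟩ := hr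
  exact ⟨n, by rw [single_pow, hn, single_zero]⟩

lemma isNilpotent_coeff_of_isIdempotentElem {R Γ : Type*} [CommRing R] [AddMonoid Γ]
    [UniqueSums Γ] {F : R[Γ]} (hF : IsIdempotentElem F) {γ : Γ} (hγ : γ ≠ 0) :
    IsNilpotent (F.coeff γ) := by
  refine nilpotent_iff_mem_prime.mpr fun p hp ↦ ?_
  rw [← Ideal.Quotient.eq_zero_iff_mem, ← coeff_mapRingHom]
  rcases IsIdempotentElem.iff_eq_zero_or_one.mp (hF.map (mapRingHom Γ (Ideal.Quotient.mk p)))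
    with h | h <;> simp [h, one_def, hγ]

variable {R Γ : Type*} [CommRing R] [AddCommMonoid Γ]

lemma isNilpotent_sub_mapDomainRingHom_zero {F : R[Γ]} (hF : ∀ γ ≠ 0, IsNilpotent (F.coeff γ)) :
    IsNilpotent (F - mapDomainRingHom R (0 : Γ →+ Γ) F) := by
  set D : R[Γ] →+ R[Γ] := AddMonoidHom.id _ - (mapDomainRingHom R (0 : Γ →+ Γ)).toAddMonoidHom
  change IsNilpotent (D F)
  rw [← sum_coeff_single F, map_finsuppSum]
  refine isNilpotent_sum fun γ _ ↦ ?_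
  by_cases hγ : γ = 0
  · subst hγ; simp [D]
  · simpa [D] using (Commute.all _ _).isNilpotent_sub (isNilpotent_single (hF γ hγ) γ)
      (isNilpotent_single (hF γ hγ) 0)

lemma coeff_eq_zero_of_isIdempotentElem [UniqueSums Γ] {F : R[Γ]} (hF : IsIdempotentElem F)
    {γ : Γ} (hγ : γ ≠ 0) : F.coeff γ = 0 := by
  have hF₀ : F = mapDomainRingHom R (0 : Γ →+ Γ) F :=
    eq_of_isNilpotent_sub_of_isIdempotentElem hF (hF.map _)
      (isNilpotent_sub_mapDomainRingHom_zero fun _ ↦ isNilpotent_coeff_of_isIdempotentElem hF)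
  rw [hF₀, mapDomainRingHom_apply, coeff_mapDomain]
  exact Finsupp.mapDomain_of_notMem_range _ _ (by simpa [eq_comm] using hγ)

end AddMonoidAlgebra

namespace GradedRing

section Semiring

variable {M Γ R σ : Type*} [AddMonoid M] [DecidableEq M] [AddMonoid Γ] [Semiring R]
  [SetLike σ R] [AddSubmonoidClass σ R] (𝒜 : M → σ) [GradedRing 𝒜]

noncomputable def toAddMonoidAlgebra (θ : M →+ Γ) : R →+* R[Γ] :=
  (DirectSum.toSemiring (fun i ↦ (singleAddHom (θ i)).comp (AddSubmonoidClass.subtype (𝒜 i)))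
      (by simp [AddMonoidAlgebra.one_def]) (fun _ _ ↦ by simp [single_mul_single])).comp
    (decomposeRingEquiv 𝒜).toRingHom

lemma toAddMonoidAlgebra_coe (θ : M →+ Γ) {i : M} (x : 𝒜 i) :
    toAddMonoidAlgebra 𝒜 θ x = single (θ i) (x : R) := by
  simp [toAddMonoidAlgebra, decomposeRingEquiv]

lemma decompose_coeff_toAddMonoidAlgebra (θ : M →+ Γ) (r : R) (m : M) :
    decompose 𝒜 ((toAddMonoidAlgebra 𝒜 θ r).coeff (θ m)) m = decompose 𝒜 r m := by
  induction r using DirectSum.Decomposition.inductionOn 𝒜 with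
  | zero => simp
  | add r s hr hs => simp [hr, hs]
  | @homogeneous i x =>
    by_cases h : i = m
    · subst h; simp [toAddMonoidAlgebra_coe]
    · classical
      rw [toAddMonoidAlgebra_coe, coeff_single, Finsupp.single_apply]
      split_ifs <;> simp [of_eq_of_ne _ _ _ (Ne.symm h)]

end Semiring

lemma decompose_eq_zero_of_isIdempotentElem {M Γ R σ : Type*} [AddMonoid M] [DecidableEq M]
    [AddCommMonoid Γ] [UniqueSums Γ] [CommRing R] [SetLike σ R] [AddSubmonoidClass σ R]
    (𝒜 : M → σ) [GradedRing 𝒜] (θ : M →+ Γ) {e : R} (he : IsIdempotentElem e) {m : M}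
    (hm : θ m ≠ 0) : decompose 𝒜 e m = 0 := by
  rw [← decompose_coeff_toAddMonoidAlgebra 𝒜 θ,
    coeff_eq_zero_of_isIdempotentElem (he.map _) hm, decompose_zero, DirectSum.zero_apply]

end GradedRing

/-- Every idempotent of an `M`-graded commutative ring, with `M` a commutative monoid, is
contained in the subring `⊕_{m ∈ M̃} R_m`, where `M̃ = {x : ∃ n ≥ 1, ∃ y, n•x + y = y}` is
the quasi-torsion submonoid of `M`: all homogeneous components of the idempotent of degree
outside `M̃` vanish. -/
theorem idempotent_supported_on_quasiTorsion
    {M : Type*} [AddCommMonoid M] [DecidableEq M]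
    {R : Type*} [CommRing R] (𝒜 : M → AddSubgroup R) [GradedRing 𝒜]
    (e : R) (he : IsIdempotentElem e) :
    ∀ m : M, (¬ ∃ n : ℕ, 1 ≤ n ∧ ∃ y : M, n • m + y = y) →
      (DirectSum.decompose 𝒜 e m : R) = 0 := by
  intro m hm
  obtain ⟨θ, hθ⟩ := exists_addMonoidHom_rat_ne_zero hm
  rw [GradedRing.decompose_eq_zero_of_isIdempotentElem 𝒜 θ he hθ, ZeroMemClass.coe_zero]
end

section
/- Let G be a torsion-free abelian group and let R be a G-graded commutative ring that is an integral domain. Then every invertible element of R is homogeneous. -/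
/-!
A torsion-free abelian group embeds into its divisible hull, a `ℚ`-vector space, and hence,
ordering coordinates lexicographically along a well-ordered basis, into a linearly ordered
abelian group. Along such an order the highest component of a product in a domain is the
(nonzero) product of the highest components, and likewise for the lowest ones. If `f * g = 1`,
the highest degrees of `f` and `g` add up to `0`, and so do their lowest degrees; this forces the
highest and the lowest degree of `f` to coincide.
-/

open DirectSum

universe u

theorem IsAddTorsionFree.exists_injective_addMonoidHom_linearOrder (G : Type u) [AddCommGroup G]
    [IsAddTorsionFree G] :
    ∃ (L : Type u) (_ : AddCommGroup L) (_ : LinearOrder L) (_ : IsOrderedAddMonoid L)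
      (ψ : G →+ L), Function.Injective ψ := by
  classical
  let ι := Module.Basis.ofVectorSpaceIndex ℚ (DivisibleHull G)
  let b : Module.Basis ι ℚ (DivisibleHull G) := Module.Basis.ofVectorSpace ℚ (DivisibleHull G)
  let : LinearOrder ι := linearOrderOfSTO WellOrderingRel
  exact ⟨Lex (ι →₀ ℚ), _, _, inferInstance,
    ((b.repr.toAddEquiv.trans (toLexAddEquiv _)).toAddMonoidHom.comp
      (DivisibleHull.coeAddMonoidHom G)),
    (toLexAddEquiv _).injective.comp (b.repr.injective.comp DivisibleHull.coe_injective)⟩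

namespace GradedRing

variable {ι R σ L : Type*} [DecidableEq ι] [AddMonoid ι] [Semiring R] [SetLike σ R]
  [AddSubmonoidClass σ R] (𝒜 : ι → σ) [GradedRing 𝒜]

def IsLeadingDegree [LT L] (ψ : ι → L) (x : R) (a : ι) : Prop :=
  (decompose 𝒜 x a : R) ≠ 0 ∧ ∀ i, ψ a < ψ i → (decompose 𝒜 x i : R) = 0

variable {𝒜}

section LinearOrder

variable [LinearOrder L] {ψ : ι → L} {x : R} {a : ι}

theorem exists_isLeadingDegree (ψ : ι → L) (hx : x ≠ 0) : ∃ a, IsLeadingDegree 𝒜 ψ x a := by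
  classical
  have hsupp : (decompose 𝒜 x).support.Nonempty :=
    Finset.nonempty_iff_ne_empty.mpr <|
      mt DFinsupp.support_eq_empty.mp ((decomposeAddEquiv 𝒜).map_ne_zero_iff.mpr hx)
  obtain ⟨a, ha, hmax⟩ := Finset.exists_max_image _ ψ hsupp
  refine ⟨a, by simpa using ha, fun i hi => ?_⟩
  by_contra h
  exact not_lt_of_ge (hmax i (by simpa using h)) hi

theorem IsLeadingDegree.le_of_ne_zero (hx : IsLeadingDegree 𝒜 ψ x a) {i : ι}
    (hi : (decompose 𝒜 x i : R) ≠ 0) : ψ i ≤ ψ a :=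
  le_of_not_gt fun h => hi (hx.2 i h)

end LinearOrder

section OrderedMonoid

variable [AddCommMonoid L] [LinearOrder L] [IsOrderedCancelAddMonoid L] {ψ : ι →+ L}
  {x y : R} {a b : ι}

theorem IsLeadingDegree.coe_decompose_mul_add (hψ : Function.Injective ψ)
    (hx : IsLeadingDegree 𝒜 ψ x a) (hy : IsLeadingDegree 𝒜 ψ y b) :
    (decompose 𝒜 (x * y) (a + b) : R) = decompose 𝒜 x a * decompose 𝒜 y b := by
  classical
  rw [decompose_mul, coe_mul_apply]
  refine Finset.sum_eq_single_of_mem (a, b) (by simpa using And.intro hx.1 hy.1) ?_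
  rintro ⟨i, j⟩ hij hne
  simp only [Finset.mem_filter, Finset.mem_product, DFinsupp.mem_support_iff] at hij
  obtain ⟨⟨hi, hj⟩, hsum⟩ := hij
  have hψsum : ψ i + ψ j = ψ a + ψ b := by rw [← map_add, ← map_add, hsum]
  obtain ⟨hia, hjb⟩ := (add_eq_add_iff_eq_and_eq (hx.le_of_ne_zero (by simpa using hi))
    (hy.le_of_ne_zero (by simpa using hj))).mp hψsum
  exact absurd (Prod.ext (hψ hia) (hψ hjb)) hne

theorem IsLeadingDegree.add_eq_of_mul_mem [NoZeroDivisors R] (hψ : Function.Injective ψ)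
    (hx : IsLeadingDegree 𝒜 ψ x a) (hy : IsLeadingDegree 𝒜 ψ y b) {n : ι} (hxy : x * y ∈ 𝒜 n) :
    a + b = n := by
  by_contra hne
  have hzero := decompose_of_mem_ne 𝒜 hxy (Ne.symm hne)
  rw [hx.coe_decompose_mul_add hψ hy] at hzero
  exact mul_ne_zero hx.1 hy.1 hzero

end OrderedMonoid

section OrderedGroup

variable [AddCommGroup L] [LinearOrder L] [IsOrderedAddMonoid L] {ψ : ι →+ L} {x : R} {a : ι}

theorem IsLeadingDegree.mem_of_isLeadingDegree_neg (hψ : Function.Injective ψ)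
    (hx : IsLeadingDegree 𝒜 ψ x a) (hx' : IsLeadingDegree 𝒜 (-ψ) x a) : x ∈ 𝒜 a := by
  have hcomp : decompose 𝒜 x = of _ a (decompose 𝒜 x a) := by
    ext i
    rcases eq_or_ne i a with rfl | hia
    · rw [of_eq_same]
    · rw [of_eq_of_ne _ _ _ hia, ZeroMemClass.coe_zero]
      rcases lt_trichotomy (ψ i) (ψ a) with h | h | h
      · exact hx'.2 i (by simpa using h)
      · exact absurd (hψ h) hia
      · exact hx.2 i h
  rw [← (decompose 𝒜).symm_apply_apply x, hcomp, decompose_symm_of]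
  exact SetLike.coe_mem _

theorem isHomogeneousElem_of_isUnit [NoZeroDivisors R] [Nontrivial R]
    (hψ : Function.Injective ψ) (hx : IsUnit x) : SetLike.IsHomogeneousElem 𝒜 x := by
  obtain ⟨y, hxy⟩ := hx.exists_right_inv
  have hxy_mem : x * y ∈ 𝒜 0 := hxy ▸ SetLike.one_mem_graded 𝒜
  have hnegψ : Function.Injective (-ψ) := neg_injective.comp hψ
  obtain ⟨a, ha⟩ := exists_isLeadingDegree (𝒜 := 𝒜) ψ hx.ne_zero
  obtain ⟨b, hb⟩ := exists_isLeadingDegree (𝒜 := 𝒜) ψ (right_ne_zero_of_mul_eq_one hxy)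
  obtain ⟨a', ha'⟩ := exists_isLeadingDegree (𝒜 := 𝒜) (-ψ) hx.ne_zero
  obtain ⟨b', hb'⟩ := exists_isLeadingDegree (𝒜 := 𝒜) (-ψ) (right_ne_zero_of_mul_eq_one hxy)
  have hsum : ψ a' + ψ b' = ψ a + ψ b := by
    rw [← map_add, ← map_add, ha.add_eq_of_mul_mem hψ hb hxy_mem,
      ha'.add_eq_of_mul_mem hnegψ hb' hxy_mem]
  have haa' : a' = a := hψ <|
    ((add_eq_add_iff_eq_and_eq (ha.le_of_ne_zero ha'.1) (hb.le_of_ne_zero hb'.1)).mp hsum).1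
  exact ⟨a, ha.mem_of_isLeadingDegree_neg hψ (haa' ▸ ha')⟩

end OrderedGroup

end GradedRing

/-- Every invertible element of a `G`-graded integral domain with `G` a torsion-free abelian
group is homogeneous. -/
theorem unit_of_graded_domain_is_homogeneous
    {G : Type*} [AddCommGroup G] [DecidableEq G]
    (hG : ∀ (n : ℕ) (x : G), n ≠ 0 → n • x = 0 → x = 0)
    {R : Type*} [CommRing R] [IsDomain R] (𝒜 : G → AddSubgroup R) [GradedRing 𝒜]
    (f : R) (hf : IsUnit f) :
    SetLike.IsHomogeneousElem 𝒜 f := by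
  have : IsAddTorsionFree G :=
    ⟨fun n hn x y hxy => sub_eq_zero.mp (hG n _ hn (by rw [nsmul_sub, sub_eq_zero]; exact hxy))⟩
  obtain ⟨L, _, _, _, ψ, hψ⟩ := IsAddTorsionFree.exists_injective_addMonoidHom_linearOrder G
  exact GradedRing.isHomogeneousElem_of_isUnit hψ hf
end

section
/- Let R be a commutative integral domain and G a torsion-free abelian group. Then the units of the group-ring R[G] are precisely the elements of the form r ε_x where r is a unit of R and x ∈ G. -/
/-!
A torsion-free abelian group embeds into its divisible hull, a `ℚ`-vector space, and therefore
has two unique sums: for finite `A`, `B` with `#A * #B > 1` there are two distinct pairs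
`(a, b) ∈ A × B` whose sum is attained by no other pair. If `f * g = 1`, the coefficient of
`f * g` at such a sum is `f a * g b ≠ 0`, so both sums are `0`, contradicting uniqueness.
Hence `f` and its inverse are monomials, and their coefficients are inverse to each other.
-/

open Finset

namespace AddMonoidAlgebra

variable {R A : Type*} [Semiring R]

theorem add_eq_zero_of_mul_eq_one_of_uniqueAdd [NoZeroDivisors R] [AddZeroClass A]
    {f g : R[A]} (hfg : f * g = 1) {a b : A} (ha : a ∈ f.coeff.support)
    (hb : b ∈ g.coeff.support) (hab : UniqueAdd f.coeff.support g.coeff.support a b) :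
    a + b = 0 := by
  have hne : (1 : R[A]).coeff (a + b) ≠ 0 := by
    rw [← hfg, coeff_mul_add_of_uniqueAdd hab]
    exact mul_ne_zero (Finsupp.mem_support_iff.mp ha) (Finsupp.mem_support_iff.mp hb)
  simpa using Finsupp.support_single_subset (Finsupp.mem_support_iff.mpr hne)

theorem card_support_mul_card_support_le_one_of_mul_eq_one [NoZeroDivisors R] [AddZeroClass A]
    [TwoUniqueSums A] {f g : R[A]} (hfg : f * g = 1) :
    #f.coeff.support * #g.coeff.support ≤ 1 := by
  by_contra! hcard
  obtain ⟨p, hp, q, hq, hpq, hpu, hqu⟩ := TwoUniqueSums.uniqueAdd_of_one_lt_card hcard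
  rw [mem_product] at hp hq
  have hp0 := add_eq_zero_of_mul_eq_one_of_uniqueAdd hfg hp.1 hp.2 hpu
  have hq0 := add_eq_zero_of_mul_eq_one_of_uniqueAdd hfg hq.1 hq.2 hqu
  obtain ⟨h1, h2⟩ := hpu hq.1 hq.2 (hq0.trans hp0.symm)
  exact hpq (Prod.ext h1 h2).symm

theorem exists_eq_single_of_mul_eq_one [NoZeroDivisors R] [Nontrivial R] [AddZeroClass A]
    [TwoUniqueSums A] {f g : R[A]} (hfg : f * g = 1) : ∃ a r, f = single a r := by
  have hf : f.coeff.support.Nonempty := by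
    rw [Finsupp.support_nonempty_iff, Ne, coeff_eq_zero]
    rintro rfl
    simp at hfg
  have hg : g.coeff.support.Nonempty := by
    rw [Finsupp.support_nonempty_iff, Ne, coeff_eq_zero]
    rintro rfl
    simp at hfg
  have hcard := card_support_mul_card_support_le_one_of_mul_eq_one hfg
  obtain ⟨a, -, hfa⟩ := Finsupp.card_support_eq_one.mp
    (Nat.eq_one_of_mul_eq_one_right (by nlinarith [hf.card_pos, hg.card_pos]))
  exact ⟨a, f.coeff a, coeff_inj.mp hfa⟩

theorem isUnit_iff_exists_eq_single [NoZeroDivisors R] [Nontrivial R] [AddGroup A]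
    [TwoUniqueSums A] {f : R[A]} : IsUnit f ↔ ∃ r a, IsUnit r ∧ f = single a r := by
  constructor
  · rintro ⟨u, rfl⟩
    obtain ⟨a, r, hr⟩ := exists_eq_single_of_mul_eq_one u.mul_inv
    obtain ⟨b, s, hs⟩ := exists_eq_single_of_mul_eq_one u.inv_mul
    have hrs := u.mul_inv
    have hsr := u.inv_mul
    rw [hr, hs, single_mul_single, one_def, single_inj] at hrs hsr
    simp only [one_ne_zero, and_false, or_false] at hrs hsr
    exact ⟨r, a, ⟨⟨r, s, hrs.2, hsr.2⟩, rfl⟩, hr⟩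
  · rintro ⟨_, a, ⟨u, rfl⟩, rfl⟩
    refine isUnit_iff_exists.mpr ⟨single (-a) ↑u⁻¹, ?_, ?_⟩ <;>
      simp [single_mul_single, one_def]

end AddMonoidAlgebra

instance IsAddTorsionFree.to_twoUniqueSums {G : Type*} [AddCommGroup G] [IsAddTorsionFree G] :
    TwoUniqueSums G :=
  .of_injective_addHom (DivisibleHull.coeAddMonoidHom G).toAddHom DivisibleHull.coe_injective
    inferInstance

/-- If `R` is an integral domain and `G` is a torsion-free abelian group, then the units of
the group-ring `R[G]` are precisely the elements of the form `r ε_x` with `r` a unit of `R`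
and `x ∈ G`. -/
theorem isUnit_groupRing_iff_single
    {R : Type*} [CommRing R] [IsDomain R]
    {G : Type*} [AddCommGroup G]
    (hG : ∀ (n : ℕ) (x : G), n ≠ 0 → n • x = 0 → x = 0)
    (f : AddMonoidAlgebra R G) :
    IsUnit f ↔ ∃ (r : R) (x : G), IsUnit r ∧ f = AddMonoidAlgebra.single x r := by
  have : IsAddTorsionFree G :=
    ⟨fun n hn a b hab ↦ sub_eq_zero.mp (hG n _ hn (by rw [nsmul_sub, sub_eq_zero]; exact hab))⟩
  exact AddMonoidAlgebra.isUnit_iff_exists_eq_single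
end

section
/- Let R be a commutative ring and let f = r₁ + ⋯ + r_n be an element of R. If the ideal generated by r₁, …, r_n is all of R and r_i r_k is nilpotent for all i ≠ k, then f is invertible in R. -/
/-! If `∑ rᵢ` lay in a maximal ideal `m`, then all `rᵢ rₖ` (`i ≠ k`) would too, being nilpotent.
By primality all but at most one `rᵢ` lie in `m`, and then the sum forces the last one into `m`
as well; so `m` would contain the ideal generated by the `rᵢ`, which is everything. -/

open Finset

theorem Ideal.IsPrime.forall_mem_of_sum_mem_of_pairwise_mul_mem {R ι : Type*} [CommRing R]
    {p : Ideal R} (hp : p.IsPrime) {s : Finset ι} {r : ι → R} (hsum : ∑ i ∈ s, r i ∈ p)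
    (hmul : ∀ i ∈ s, ∀ k ∈ s, i ≠ k → r i * r k ∈ p) : ∀ i ∈ s, r i ∈ p := by
  classical
  intro j hj
  by_contra hrj
  have hrest : ∀ k ∈ s.erase j, r k ∈ p := fun k hk =>
    (hp.mem_or_mem (hmul j hj k (mem_of_mem_erase hk) (ne_of_mem_erase hk).symm)).resolve_left hrj
  rw [← add_sum_erase s r hj] at hsum
  exact hrj ((p.add_mem_iff_left (p.sum_mem hrest)).mp hsum)

/-- If `f = r₁ + ⋯ + r_n` in a commutative ring `R`, the ideal generated by `r₁, …, r_n` is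
all of `R`, and `r_i * r_k` is nilpotent whenever `i ≠ k`, then `f` is invertible. -/
theorem isUnit_sum_of_span_top_of_pairwise_nilpotent
    {R : Type*} [CommRing R] (n : ℕ) (r : Fin n → R)
    (hspan : Ideal.span (Set.range r) = ⊤)
    (hnil : ∀ i k : Fin n, i ≠ k → IsNilpotent (r i * r k)) :
    IsUnit (∑ i, r i) := by
  by_contra hf
  obtain ⟨m, hm, hfm⟩ := exists_max_ideal_of_mem_nonunits hf
  have hmul : ∀ i ∈ univ, ∀ k ∈ univ, i ≠ k → r i * r k ∈ m := fun i _ k _ hik =>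
    nilradical_le_prime m (mem_nilradical.mpr (hnil i k hik))
  have hr := hm.isPrime.forall_mem_of_sum_mem_of_pairwise_mul_mem hfm hmul
  apply hm.ne_top
  rw [eq_top_iff, ← hspan, Ideal.span_le]
  rintro _ ⟨i, rfl⟩
  exact hr i (mem_univ i)
end

section
/- Let G be a torsion-free abelian group, let R = ⊕_{k∈G} R_k be a G-graded commutative ring, and let f = Σ_{k∈G} r_k be an element of R with r_k ∈ R_k for all k (all but finitely many r_k zero). Then f is invertible in R if and only if the ideal generated by {r_k : k ∈ G} is all of R and r_i r_k is nilpotent for all i ≠ k. -/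
open DirectSum


private lemma sum_mul_sum_eq_diag {ι R : Type*} [CommRing R] (s : Finset ι) (a b : ι → R)
    (h : ∀ i ∈ s, ∀ j ∈ s, i ≠ j → a i * b j = 0) :
    (∑ i ∈ s, a i) * (∑ j ∈ s, b j) = ∑ i ∈ s, a i * b i := by
  rw [Finset.sum_mul_sum]
  refine Finset.sum_congr rfl fun i hi => ?_
  exact Finset.sum_eq_single_of_mem i hi fun j hj hne => h i hi j hj (Ne.symm hne) |>.symm ▸ rfl

private lemma twoUniqueSums_of_torsionFree {G : Type*} [AddCommGroup G]
    (hG : ∀ (n : ℕ) (x : G), n ≠ 0 → n • x = 0 → x = 0) : TwoUniqueSums G := by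
  classical
  haveI : NoZeroSMulDivisors ℤ G := by
    constructor
    intro n x h
    rcases eq_or_ne n 0 with rfl | hn
    · exact Or.inl rfl
    · refine Or.inr (hG n.natAbs x (Int.natAbs_ne_zero.mpr hn) ?_)
      have h2 : (n.natAbs : ℤ) • x = 0 := by
        rcases Int.natAbs_eq n with he | he
        · rw [← he]; exact h
        · rw [he, neg_smul, neg_eq_zero] at h; exact h
      simpa using h2
  constructor
  intro A B hc
  set M : Submodule ℤ G := Submodule.span ℤ (((A ∪ B) : Finset G) : Set G) with hM
  haveI : Module.Finite ℤ M := Module.Finite.span_of_finite ℤ (Finset.finite_toSet _)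
  haveI : TwoUniqueSums M :=
    ((Module.Free.chooseBasis ℤ M).repr.toAddEquiv.twoUniqueSums_iff).mpr inferInstance
  have hmem : ∀ x ∈ A ∪ B, x ∈ M := fun x hx => Submodule.subset_span hx
  have hbijA : Set.BijOn (Subtype.val : M → G) (Subtype.val ⁻¹' (A : Set G)) (A : Set G) :=
    ⟨fun x hx => hx, Subtype.val_injective.injOn, fun a ha =>
      ⟨⟨a, hmem a (Finset.mem_union_left _ ha)⟩, ha, rfl⟩⟩
  have hbijB : Set.BijOn (Subtype.val : M → G) (Subtype.val ⁻¹' (B : Set G)) (B : Set G) :=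
    ⟨fun x hx => hx, Subtype.val_injective.injOn, fun b hb =>
      ⟨⟨b, hmem b (Finset.mem_union_right _ hb)⟩, hb, rfl⟩⟩
  set A' : Finset M := A.preimage Subtype.val hbijA.injOn with hA'
  set B' : Finset M := B.preimage Subtype.val hbijB.injOn with hB'
  have hAim : A'.image Subtype.val = A := Finset.image_preimage_of_bij _ _ hbijA
  have hBim : B'.image Subtype.val = B := Finset.image_preimage_of_bij _ _ hbijB
  have hcardA : A'.card = A.card := by
    rw [← hAim]; exact (Finset.card_image_of_injective _ Subtype.val_injective).symm
  have hcardB : B'.card = B.card := by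
    rw [← hBim]; exact (Finset.card_image_of_injective _ Subtype.val_injective).symm
  obtain ⟨p1, hp1, p2, hp2, hne, hu1, hu2⟩ :=
    TwoUniqueSums.uniqueAdd_of_one_lt_card (A := A') (B := B') (by rw [hcardA, hcardB]; exact hc)
  rw [Finset.mem_product] at hp1 hp2
  have hval : Function.Injective (Subtype.val : M → G) := Subtype.val_injective
  let φ : AddHom M G := ⟨Subtype.val, fun _ _ => rfl⟩
  have hu1' : UniqueAdd A B (p1.1 : G) (p1.2 : G) := by
    have := (UniqueAdd.addHom_image_iff φ hval (A := A') (B := B')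
      (a0 := p1.1) (b0 := p1.2)).mpr hu1
    rwa [show Finset.image φ A' = A from hAim, show Finset.image φ B' = B from hBim] at this
  have hu2' : UniqueAdd A B (p2.1 : G) (p2.2 : G) := by
    have := (UniqueAdd.addHom_image_iff φ hval (A := A') (B := B')
      (a0 := p2.1) (b0 := p2.2)).mpr hu2
    rwa [show Finset.image φ A' = A from hAim, show Finset.image φ B' = B from hBim] at this
  refine ⟨((p1.1 : G), (p1.2 : G)), ?_, ((p2.1 : G), (p2.2 : G)), ?_, ?_, hu1', hu2'⟩
  · have h1 : (p1.1 : G) ∈ A := Finset.mem_preimage.mp hp1.1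
    have h2 : (p1.2 : G) ∈ B := Finset.mem_preimage.mp hp1.2
    exact Finset.mem_product.mpr ⟨h1, h2⟩
  · have h1 : (p2.1 : G) ∈ A := Finset.mem_preimage.mp hp2.1
    have h2 : (p2.2 : G) ∈ B := Finset.mem_preimage.mp hp2.2
    exact Finset.mem_product.mpr ⟨h1, h2⟩
  · intro h
    apply hne
    have h1 := congrArg Prod.fst h
    have h2 := congrArg Prod.snd h
    exact Prod.ext (hval h1) (hval h2)

/-- Characterization of the units of a `G`-graded commutative ring with `G` a torsion-free
abelian group: an element `f` is invertible iff the ideal generated by its homogeneous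
components is all of `R` and all distinct double products of homogeneous components are
nilpotent. -/
theorem isUnit_iff_components_span_top_and_pairwise_nilpotent
    {G : Type*} [AddCommGroup G] [DecidableEq G]
    (hG : ∀ (n : ℕ) (x : G), n ≠ 0 → n • x = 0 → x = 0)
    {R : Type*} [CommRing R] (𝒜 : G → AddSubgroup R) [GradedRing 𝒜] (f : R) :
    IsUnit f ↔
      (Ideal.span (Set.range fun k : G => (DirectSum.decompose 𝒜 f k : R)) = ⊤ ∧
        ∀ i k : G, i ≠ k →
          IsNilpotent ((DirectSum.decompose 𝒜 f i : R) * (DirectSum.decompose 𝒜 f k : R))) := by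
  have tus : TwoUniqueSums G := twoUniqueSums_of_torsionFree hG
  constructor
  · intro hf
    classical
    obtain ⟨v, hv⟩ := hf
    set g : R := (↑v⁻¹ : R) with hgdef
    have hfg : f * g = 1 := by rw [← hv, hgdef]; exact_mod_cast v.mul_inv
    constructor
    · rw [Ideal.eq_top_iff_one]
      have hsum := DirectSum.sum_support_decompose 𝒜 f
      have h1 : (1 : R) = ∑ i ∈ (decompose 𝒜 f).support, (decompose 𝒜 f i : R) * g := by
        rw [← Finset.sum_mul, hsum, hfg]
      rw [h1]
      exact Ideal.sum_mem _ fun i _ => Ideal.mul_mem_right _ _ (Ideal.subset_span ⟨i, rfl⟩)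
    · intro i k hik
      rw [nilpotent_iff_mem_prime]
      intro P hP
      have : IsDomain (R ⧸ P) := Ideal.Quotient.isDomain P
      set π : R →+* R ⧸ P := Ideal.Quotient.mk P with hπ
      set F := decompose 𝒜 f with hF
      set Gg := decompose 𝒜 g with hGg
      set S : Finset G := F.support.filter (fun n => π (F n : R) ≠ 0) with hS
      set T : Finset G := Gg.support.filter (fun n => π (Gg n : R) ≠ 0) with hT
      have hMemS : ∀ n : G, π (F n : R) ≠ 0 → n ∈ S := fun n hn =>
        Finset.mem_filter.mpr ⟨DFinsupp.mem_support_iff.mpr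
          (fun h0 => hn (by rw [h0]; simp)), hn⟩
      have hMemT : ∀ n : G, π (Gg n : R) ≠ 0 → n ∈ T := fun n hn =>
        Finset.mem_filter.mpr ⟨DFinsupp.mem_support_iff.mpr
          (fun h0 => hn (by rw [h0]; simp)), hn⟩
      have hone : π f * π g = 1 := by rw [← map_mul, hfg, map_one]
      have hSne : S.Nonempty := by
        by_contra hS0
        rw [Finset.not_nonempty_iff_eq_empty] at hS0
        have hf0 : π f = 0 := by
          conv_lhs => rw [← DirectSum.sum_support_decompose 𝒜 f]
          rw [map_sum]
          refine Finset.sum_eq_zero fun n _ => ?_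
          by_contra h0
          exact absurd (hS0 ▸ hMemS n h0) (Finset.notMem_empty n)
        rw [hf0, zero_mul] at hone
        exact zero_ne_one hone
      have hTne : T.Nonempty := by
        by_contra hT0
        rw [Finset.not_nonempty_iff_eq_empty] at hT0
        have hg0 : π g = 0 := by
          conv_lhs => rw [← DirectSum.sum_support_decompose 𝒜 g]
          rw [map_sum]
          refine Finset.sum_eq_zero fun n _ => ?_
          by_contra h0
          exact absurd (hT0 ▸ hMemT n h0) (Finset.notMem_empty n)
        rw [hg0, mul_zero] at hone
        exact zero_ne_one hone
      have key : ∀ a ∈ S, ∀ b ∈ T, UniqueAdd S T a b → a + b = 0 := by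
        intro a ha b hb hu
        by_contra hab
        have hdec : ((F * Gg) (a + b) : R) = 0 := by
          rw [hF, hGg, ← DirectSum.decompose_mul, hfg]
          exact DirectSum.decompose_of_mem_ne 𝒜 (SetLike.one_mem_graded 𝒜) (fun h => hab h.symm)
        have hcoe := DirectSum.coe_mul_apply 𝒜 F Gg (a + b)
        have hsum0 : ∑ ij ∈ (F.support ×ˢ Gg.support).filter
            (fun ij : G × G => ij.1 + ij.2 = a + b), ((F ij.1 : R) * (Gg ij.2 : R)) = 0 := by
          rw [← hcoe]; exact hdec
        have hπsum : ∑ ij ∈ (F.support ×ˢ Gg.support).filter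
            (fun ij : G × G => ij.1 + ij.2 = a + b), π (F ij.1 : R) * π (Gg ij.2 : R) = 0 := by
          rw [← map_zero π, ← hsum0, map_sum]
          exact Finset.sum_congr rfl fun ij _ => (map_mul π _ _)
        have habmem : (a, b) ∈ (F.support ×ˢ Gg.support).filter
            (fun ij : G × G => ij.1 + ij.2 = a + b) :=
          Finset.mem_filter.mpr ⟨Finset.mem_product.mpr
            ⟨Finset.filter_subset _ _ ha, Finset.filter_subset _ _ hb⟩, rfl⟩
        have hsingle : ∑ ij ∈ (F.support ×ˢ Gg.support).filter
            (fun ij : G × G => ij.1 + ij.2 = a + b), π (F ij.1 : R) * π (Gg ij.2 : R)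
            = π (F a : R) * π (Gg b : R) := by
          refine Finset.sum_eq_single_of_mem _ habmem ?_
          rintro ⟨x, y⟩ hxy hne
          rw [Finset.mem_filter, Finset.mem_product] at hxy
          by_contra h0
          have hx : π (F x : R) ≠ 0 := fun h => h0 (by rw [h, zero_mul])
          have hy : π (Gg y : R) ≠ 0 := fun h => h0 (by rw [h, mul_zero])
          obtain ⟨hxa, hyb⟩ := hu (hMemS x hx) (hMemT y hy) hxy.2
          exact hne (by rw [hxa, hyb])
        rw [hsingle] at hπsum
        rcases mul_eq_zero.mp hπsum with h | h
        · exact (Finset.mem_filter.mp ha).2 h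
        · exact (Finset.mem_filter.mp hb).2 h
      have hcard : S.card ≤ 1 := by
        by_contra hc
        push_neg at hc
        have hc' : 1 < S.card * T.card :=
          lt_of_lt_of_le hc (Nat.le_mul_of_pos_right _ (Finset.card_pos.mpr hTne))
        obtain ⟨p1, hp1, p2, hp2, hne, hu1, hu2⟩ := tus.uniqueAdd_of_one_lt_card hc'
        rw [Finset.mem_product] at hp1 hp2
        have h1 : p1.1 + p1.2 = 0 := key _ hp1.1 _ hp1.2 hu1
        have h2 : p2.1 + p2.2 = 0 := key _ hp2.1 _ hp2.2 hu2
        obtain ⟨ha, hb⟩ := hu1 hp2.1 hp2.2 (by rw [h1, h2])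
        exact hne (Prod.ext ha.symm hb.symm)
      -- conclude
      have : π (F i : R) = 0 ∨ π (F k : R) = 0 := by
        by_contra hboth
        push_neg at hboth
        have h2 : 1 < S.card := Finset.one_lt_card.mpr
          ⟨i, hMemS i hboth.1, k, hMemS k hboth.2, hik⟩
        omega
      rw [← Ideal.Quotient.eq_zero_iff_mem, map_mul]
      rcases this with h | h
      · rw [h, zero_mul]
      · rw [h, mul_zero]

  · rintro ⟨hspan, hnil⟩
    classical
    set π : R →+* R ⧸ nilradical R := Ideal.Quotient.mk (nilradical R) with hπ
    set r : G → R := fun n => (DirectSum.decompose 𝒜 f n : R) with hr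
    have hzero : ∀ i k : G, i ≠ k → π (r i) * π (r k) = 0 := by
      intro i k h
      rw [← map_mul, Ideal.Quotient.eq_zero_iff_mem]
      exact hnil i k h
    have h1 : (1 : R) ∈ Ideal.span (Set.range r) := hspan ▸ Submodule.mem_top
    rw [Ideal.span, Finsupp.mem_span_range_iff_exists_finsupp] at h1
    obtain ⟨c, hc⟩ := h1
    -- hc : (c.sum fun i a => a • r i) = 1
    have hc' : ∑ i ∈ c.support, c i * r i = 1 := by
      rw [← hc]; rfl
    have eq1 : ∑ i ∈ c.support, π (c i) * π (r i) = 1 := by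
      rw [← map_one π, ← hc', map_sum]
      exact Finset.sum_congr rfl fun i _ => map_mul π _ _
    have eq2 : ∑ i ∈ c.support, (π (c i) * π (r i)) * (π (c i) * π (r i)) = 1 := by
      rw [← sum_mul_sum_eq_diag c.support _ _ ?_, eq1, one_mul]
      intro i _ j _ hij
      have : (π (c i) * π (r i)) * (π (c j) * π (r j))
          = (π (c i) * π (c j)) * (π (r i) * π (r j)) := by ring
      rw [this, hzero i j hij, mul_zero]
    have eq3 : ∀ i : G, π f * π (r i) = π (r i) * π (r i) := by
      intro i
      have hf : f = ∑ k ∈ (decompose 𝒜 f).support, r k :=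
        (DirectSum.sum_support_decompose 𝒜 f).symm
      calc π f * π (r i) = ∑ k ∈ (decompose 𝒜 f).support, π (r k) * π (r i) := by
            conv_lhs => rw [hf]
            rw [map_sum, Finset.sum_mul]
        _ = π (r i) * π (r i) := by
            refine Finset.sum_eq_single i (fun k _ hk => hzero k i hk) ?_
            intro hi
            have : r i = 0 := by
              rw [hr]
              simp [DFinsupp.notMem_support_iff.mp hi]
            simp [this]
    -- the inverse mod nilradical
    set H : R := ∑ i ∈ c.support, c i ^ 2 * r i with hH
    have hfH : π (f * H) = 1 := by
      rw [map_mul, hH, map_sum, Finset.mul_sum]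
      rw [← eq2]
      refine Finset.sum_congr rfl fun i _ => ?_
      rw [map_mul, map_pow]
      calc π f * (π (c i) ^ 2 * π (r i)) = π (c i) ^ 2 * (π f * π (r i)) := by ring
        _ = π (c i) ^ 2 * (π (r i) * π (r i)) := by rw [eq3]
        _ = π (c i) * π (r i) * (π (c i) * π (r i)) := by ring
    have hnilmem : f * H - 1 ∈ nilradical R := by
      rw [← Ideal.Quotient.eq_zero_iff_mem, map_sub, hfH, map_one, sub_self]
    have hunit : IsUnit (f * H) := by
      have : f * H = (f * H - 1) + 1 := by ring
      rw [this]
      exact (mem_nilradical.mp hnilmem).isUnit_add_one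
    exact isUnit_of_mul_isUnit_left hunit
end

section
/- Let M be a totally ordered cancellative commutative monoid whose identity element 0 is the smallest element, let R = ⊕_{x∈M} R_x be an M-graded commutative ring, and let f = Σ_{x∈M} r_x ∈ R with r_x ∈ R_x for all x. Then f is invertible in R if and only if r₀ is invertible in the subring R₀ and r_x is nilpotent for all x ≠ 0. -/
/-!
If `f * g = 1`, then `f₀ * g₀ = (f * g)₀ = 1` because `0` is the least degree. For `x ≠ 0`, the
component `fₓ` lies in every prime `P`: otherwise let `i ≥ x` and `j` be the largest degrees in
which `f` and `g` have a component outside `P`; modulo `P` the degree-`(i + j)` component of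
`f * g` is `fᵢ * gⱼ ∉ P`, whereas that of `1` vanishes since `i + j > 0`. Conversely, `f` is the
unit `f₀` plus the nilpotent element `f - f₀ = ∑_{x ≠ 0} fₓ`.
-/

namespace DirectSum

variable {ι R : Type*} [DecidableEq ι] [CommRing R] (𝒜 : ι → AddSubgroup R)

theorem isNilpotent_of_forall_isNilpotent_decompose [Decomposition 𝒜] {r : R}
    (h : ∀ i, IsNilpotent (decompose 𝒜 r i : R)) : IsNilpotent r := by
  classical
  rw [← sum_support_decompose 𝒜 r]
  exact isNilpotent_sum fun i _ ↦ h i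

theorem isNilpotent_sub_coe_decompose_zero [AddMonoid ι] [GradedRing 𝒜] {f : R}
    (h : ∀ x ≠ 0, IsNilpotent (decompose 𝒜 f x : R)) :
    IsNilpotent (f - decompose 𝒜 f 0) := by
  refine isNilpotent_of_forall_isNilpotent_decompose 𝒜 fun x ↦ ?_
  rcases eq_or_ne x 0 with rfl | hx
  · simp
  · simpa [of_eq_of_ne _ _ _ hx] using h x hx

theorem coe_decompose_mul_add_sub_mul_mem [AddMonoid ι] [GradedRing 𝒜] {I : Ideal R} {a b : R}
    {i j : ι} (h : ∀ k l, k + l = i + j → (k, l) ≠ (i, j) →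
      (decompose 𝒜 a k : R) * decompose 𝒜 b l ∈ I) :
    (decompose 𝒜 (a * b) (i + j) : R) - decompose 𝒜 a i * decompose 𝒜 b j ∈ I := by
  classical
  rw [← Ideal.Quotient.eq, decompose_mul, coe_mul_apply, map_sum]
  refine Finset.sum_eq_single (i, j) (fun ⟨k, l⟩ hkl hne ↦ ?_) fun hij ↦ ?_
  · exact Ideal.Quotient.eq_zero_iff_mem.mpr (h k l (Finset.mem_filter.mp hkl).2 hne)
  · simp only [Finset.mem_filter, Finset.mem_product, DFinsupp.mem_support_iff, and_true,
      not_and_or, not_not] at hij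
    rcases hij with h | h <;> simp [h]

theorem coe_decompose_mul_zero [AddCommMonoid ι] [PartialOrder ι] [IsOrderedAddMonoid ι]
    [GradedRing 𝒜] (h0 : ∀ x : ι, 0 ≤ x) (a b : R) :
    (decompose 𝒜 (a * b) 0 : R) = decompose 𝒜 a 0 * decompose 𝒜 b 0 := by
  have := coe_decompose_mul_add_sub_mul_mem 𝒜 (I := ⊥) (a := a) (b := b) (i := (0 : ι)) (j := 0)
    fun k l hkl hne ↦ absurd ((add_eq_zero_iff_of_nonneg (h0 k) (h0 l)).mp
      (by simpa using hkl)) (by simpa using hne)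
  rwa [Ideal.mem_bot, sub_eq_zero, add_zero] at this

theorem coe_decompose_zero_mul_eq_one [AddCommMonoid ι] [PartialOrder ι] [IsOrderedAddMonoid ι]
    [GradedRing 𝒜] (h0 : ∀ x : ι, 0 ≤ x) {f g : R} (hfg : f * g = 1) :
    (decompose 𝒜 f 0 : R) * decompose 𝒜 g 0 = 1 := by
  rw [← coe_decompose_mul_zero 𝒜 h0, hfg, decompose_of_mem_same 𝒜 SetLike.GradedOne.one_mem]

theorem exists_max_degree_coe_decompose_notMem [LinearOrder ι] [Decomposition 𝒜] (I : Ideal R)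
    {r : R} {x : ι} (hx : (decompose 𝒜 r x : R) ∉ I) :
    ∃ i, x ≤ i ∧ (decompose 𝒜 r i : R) ∉ I ∧ ∀ k, i < k → (decompose 𝒜 r k : R) ∈ I := by
  classical
  set S := (decompose 𝒜 r).support.filter fun k ↦ (decompose 𝒜 r k : R) ∉ I
  have mem_S {k} (hk : (decompose 𝒜 r k : R) ∉ I) : k ∈ S :=
    Finset.mem_filter.mpr ⟨DFinsupp.mem_support_iff.mpr fun h ↦ hk (by simp [h]), hk⟩
  refine ⟨S.max' ⟨x, mem_S hx⟩, S.le_max' x (mem_S hx), (Finset.mem_filter.mp (S.max'_mem _)).2,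
    fun k hk ↦ ?_⟩
  by_contra hkI
  exact (S.le_max' k (mem_S hkI)).not_gt hk

variable [AddCommMonoid ι] [LinearOrder ι] [IsOrderedCancelAddMonoid ι] [GradedRing 𝒜]

theorem coe_decompose_mul_add_sub_mul_mem_of_forall_lt {I : Ideal R} {a b : R} {i j : ι}
    (ha : ∀ k, i < k → (decompose 𝒜 a k : R) ∈ I) (hb : ∀ l, j < l → (decompose 𝒜 b l : R) ∈ I) :
    (decompose 𝒜 (a * b) (i + j) : R) - decompose 𝒜 a i * decompose 𝒜 b j ∈ I := by
  refine coe_decompose_mul_add_sub_mul_mem 𝒜 fun k l hkl hne ↦ ?_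
  rcases lt_or_ge i k with hik | hki
  · exact I.mul_mem_right _ (ha k hik)
  rcases lt_or_ge j l with hjl | hlj
  · exact I.mul_mem_left _ (hb l hjl)
  obtain rfl : k = i := hki.eq_of_not_lt fun hlt ↦ (add_lt_add_of_lt_of_le hlt hlj).ne hkl
  exact (hne (by rw [add_left_cancel hkl])).elim

theorem coe_decompose_mem_of_mul_eq_one (h0 : ∀ x : ι, 0 ≤ x) {f g : R} (hfg : f * g = 1)
    (P : Ideal R) [P.IsPrime] {x : ι} (hx : x ≠ 0) : (decompose 𝒜 f x : R) ∈ P := by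
  by_contra hfx
  obtain ⟨i, hxi, hfi, hf⟩ := exists_max_degree_coe_decompose_notMem 𝒜 P hfx
  have hg0 : (decompose 𝒜 g 0 : R) ∉ P := fun hg0 ↦ Ideal.IsPrime.one_notMem ‹_› <| by
    simpa [coe_decompose_zero_mul_eq_one 𝒜 h0 hfg] using P.mul_mem_left (decompose 𝒜 f 0 : R) hg0
  obtain ⟨j, -, hgj, hg⟩ := exists_max_degree_coe_decompose_notMem 𝒜 P hg0
  have hij : i + j ≠ 0 := (lt_add_of_lt_of_nonneg ((h0 x).lt_of_ne' hx |>.trans_le hxi) (h0 j)).ne'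
  have := coe_decompose_mul_add_sub_mul_mem_of_forall_lt 𝒜 hf hg
  rw [hfg, decompose_of_mem_ne 𝒜 SetLike.GradedOne.one_mem hij.symm] at this
  rcases Ideal.IsPrime.mem_or_mem ‹_› (by simpa using this) with h | h
  exacts [hfi h, hgj h]

theorem isNilpotent_coe_decompose_of_isUnit (h0 : ∀ x : ι, 0 ≤ x) {f : R} (hf : IsUnit f)
    {x : ι} (hx : x ≠ 0) : IsNilpotent (decompose 𝒜 f x : R) := by
  obtain ⟨g, hfg⟩ := hf.exists_right_inv
  exact nilpotent_iff_mem_prime.mpr fun P _ ↦ coe_decompose_mem_of_mul_eq_one 𝒜 h0 hfg P hx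

end DirectSum

/-- Let `M` be a totally ordered cancellative commutative monoid whose identity element `0`
is the smallest element and let `R` be an `M`-graded commutative ring.  An element `f ∈ R` is
invertible iff its degree-zero component `r₀` is invertible in the subring `R₀` (i.e. has an
inverse lying in `R₀`) and its component `r_x` is nilpotent for every `x ≠ 0`. -/
theorem isUnit_iff_degreeZero_unit_and_nilpotent_components
    {M : Type*} [AddCommMonoid M] [LinearOrder M] [IsOrderedCancelAddMonoid M] [DecidableEq M]
    (h0 : ∀ x : M, 0 ≤ x)
    {R : Type*} [CommRing R] (𝒜 : M → AddSubgroup R) [GradedRing 𝒜] (f : R) :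
    IsUnit f ↔
      ((∃ s ∈ 𝒜 (0 : M), (DirectSum.decompose 𝒜 f 0 : R) * s = 1) ∧
        ∀ x : M, x ≠ 0 → IsNilpotent (DirectSum.decompose 𝒜 f x : R)) := by
  refine ⟨fun hf ↦ ⟨?_, fun x hx ↦ DirectSum.isNilpotent_coe_decompose_of_isUnit 𝒜 h0 hf hx⟩, ?_⟩
  · obtain ⟨g, hfg⟩ := hf.exists_right_inv
    exact ⟨_, SetLike.coe_mem (DirectSum.decompose 𝒜 g 0),
      DirectSum.coe_decompose_zero_mul_eq_one 𝒜 h0 hfg⟩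
  · rintro ⟨⟨s, -, hs⟩, hnil⟩
    simpa using (DirectSum.isNilpotent_sub_coe_decompose_zero 𝒜 hnil).isUnit_add_right_of_commute
      (IsUnit.of_mul_eq_one _ hs) (.all _ _)
end

section
/- Let R be a commutative ring and G a torsion-free abelian group. An element f = Σ_{x∈G} r_x ε_x of the group-ring R[G] is invertible if and only if the ideal of R generated by {r_x : x ∈ G} is all of R and r_x r_y is nilpotent in R for all x ≠ y. -/
/-!
Modulo a prime `p` of `R`, a unit `f` of `R[G]` stays a unit of `(R ⧸ p)[G]`. A torsion-free
abelian group embeds in a `ℚ`-vector space (its divisible hull) and therefore has two unique sums, so over a domain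
the units of its group ring are monomials: hence `r_x r_y` lies in every prime, i.e. it is
nilpotent. The coefficients generate `R` since `f` vanishes modulo the ideal they generate.
Conversely, under the two conditions a homomorphism `Φ` from `R[G]` to a domain kills all
coefficients but one, `r_x`, which it does not kill; so `Φ f = Φ (r_x ε_x) ≠ 0`, and `f` lies in
no maximal ideal.
-/

open Finset

theorem TwoUniqueSums.of_isAddTorsionFree (G : Type*) [AddCommGroup G] [IsAddTorsionFree G] :
    TwoUniqueSums G :=
  .of_injective_addHom (DivisibleHull.coeAddMonoidHom G).toAddHom DivisibleHull.coe_injective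
    inferInstance

namespace AddMonoidAlgebra

variable {R G : Type*}

theorem card_support_coeff_le_one_of_isUnit [Semiring R] [NoZeroDivisors R] [AddMonoid G]
    [TwoUniqueSums G] {u : AddMonoidAlgebra R G} (hu : IsUnit u) : #u.coeff.support ≤ 1 := by
  obtain ⟨w, hw⟩ := hu.exists_right_inv
  by_contra! hcard
  have hw0 : w.coeff.support.Nonempty := by
    rw [Finsupp.support_nonempty_iff, Ne, coeff_eq_zero]
    rintro rfl
    have : Subsingleton (AddMonoidAlgebra R G) := subsingleton_of_zero_eq_one (by simpa using hw)
    simp [Subsingleton.elim u 0] at hcard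
  obtain ⟨p, hp, q, hq, hpq, hup, huq⟩ := TwoUniqueSums.uniqueAdd_of_one_lt_card
    (hcard.trans_le (Nat.le_mul_of_pos_right _ hw0.card_pos))
  -- a uniquely attained sum carries a nonzero coefficient of `u * w = 1`, so it is `0`
  have sum_eq_zero {a b : G} (hab : (a, b) ∈ u.coeff.support ×ˢ w.coeff.support)
      (huniq : UniqueAdd u.coeff.support w.coeff.support a b) : a + b = 0 := by
    rw [mem_product, Finsupp.mem_support_iff, Finsupp.mem_support_iff] at hab
    have h := coeff_mul_add_of_uniqueAdd huniq
    rw [hw] at h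
    by_contra hne
    simp [one_def, Ne.symm hne, hab.1, hab.2] at h
  have hpq' := huq (mem_product.1 hp).1 (mem_product.1 hp).2
    ((sum_eq_zero hp hup).trans (sum_eq_zero hq huq).symm)
  exact hpq (Prod.ext hpq'.1 hpq'.2)

theorem isNilpotent_coeff_mul_coeff_of_isUnit [CommRing R] [AddMonoid G] [TwoUniqueSums G]
    {f : AddMonoidAlgebra R G} (hf : IsUnit f) {x y : G} (hxy : x ≠ y) :
    IsNilpotent (f.coeff x * f.coeff y) := by
  rw [← mem_nilradical, nilradical_eq_sInf, Submodule.mem_sInf]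
  rintro p (hp : Ideal.IsPrime p)
  have hmono := card_support_coeff_le_one_of_isUnit (hf.map (mapRingHom G (Ideal.Quotient.mk p)))
  rw [← Ideal.Quotient.eq_zero_iff_mem, map_mul, mul_eq_zero]
  by_contra! hne
  exact hxy (card_le_one.1 hmono x (by simpa using hne.1) y (by simpa using hne.2))

theorem span_range_coeff_eq_top_of_isUnit [CommRing R] [AddMonoid G] {f : AddMonoidAlgebra R G}
    (hf : IsUnit f) : Ideal.span (Set.range f.coeff) = ⊤ := by
  set I := Ideal.span (Set.range f.coeff)
  have hf0 : mapRingHom G (Ideal.Quotient.mk I) f = 0 := by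
    ext x
    simpa [Ideal.Quotient.eq_zero_iff_mem] using Ideal.subset_span (Set.mem_range_self x)
  have h01 := hf.map (mapRingHom G (Ideal.Quotient.mk I))
  rw [hf0, isUnit_zero_iff] at h01
  rw [← Ideal.Quotient.subsingleton_iff]
  exact subsingleton_of_zero_eq_one (by simpa using congr(($h01).coeff 0))

theorem map_ne_zero_of_span_range_coeff_eq_top [CommRing R] [AddCommGroup G] {K : Type*}
    [CommRing K] [IsDomain K] {f : AddMonoidAlgebra R G}
    (hspan : Ideal.span (Set.range f.coeff) = ⊤)
    (hnil : ∀ x y, x ≠ y → IsNilpotent (f.coeff x * f.coeff y))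
    (Φ : AddMonoidAlgebra R G →+* K) : Φ f ≠ 0 := by
  set ψ := Φ.comp singleZeroRingHom
  obtain ⟨x, hx⟩ : ∃ x, ψ (f.coeff x) ≠ 0 := by
    by_contra! h
    refine RingHom.ker_ne_top ψ (top_le_iff.1 ?_)
    rw [← hspan, Ideal.span_le]
    rintro _ ⟨x, rfl⟩
    exact h x
  have hy (y : G) (hy : y ≠ x) : ψ (f.coeff y) = 0 :=
    (mul_eq_zero.1 (map_mul ψ _ _ ▸ ((hnil x y hy.symm).map ψ).eq_zero)).resolve_left hx
  have hΦ_single (y : G) (r : R) : Φ (single y r) = ψ r * Φ (single y 1) := by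
    simp [ψ, ← map_mul, single_mul_single]
  have hunit : IsUnit (Φ (single x 1)) :=
    ((Group.isUnit (Multiplicative.ofAdd x)).map (of R G)).map Φ
  rw [← sum_coeff_single f, map_finsuppSum, Finsupp.sum_eq_single x]
  · rw [hΦ_single]
    exact mul_ne_zero hx hunit.ne_zero
  · intro y _ hyx
    rw [hΦ_single, hy y hyx, zero_mul]
  · simp

theorem isUnit_of_span_range_coeff_eq_top [CommRing R] [AddCommGroup G]
    {f : AddMonoidAlgebra R G} (hspan : Ideal.span (Set.range f.coeff) = ⊤)
    (hnil : ∀ x y, x ≠ y → IsNilpotent (f.coeff x * f.coeff y)) : IsUnit f := by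
  by_contra hf
  obtain ⟨M, hM, hfM⟩ := exists_max_ideal_of_mem_nonunits hf
  exact map_ne_zero_of_span_range_coeff_eq_top hspan hnil (Ideal.Quotient.mk M)
    (Ideal.Quotient.eq_zero_iff_mem.2 hfM)

end AddMonoidAlgebra

/-- Characterization of the units of a group-ring `R[G]` with `R` a commutative ring and `G`
a torsion-free abelian group: `f = Σ r_x ε_x` is invertible iff the ideal of `R` generated by
the coefficients `r_x` is all of `R` and `r_x * r_y` is nilpotent whenever `x ≠ y`. -/
theorem isUnit_groupRing_iff_coeffs_span_top_and_pairwise_nilpotent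
    {R : Type*} [CommRing R] {G : Type*} [AddCommGroup G]
    (hG : ∀ (n : ℕ) (x : G), n ≠ 0 → n • x = 0 → x = 0)
    (f : AddMonoidAlgebra R G) :
    IsUnit f ↔
      (Ideal.span (Set.range fun x : G => f.coeff x) = ⊤ ∧
        ∀ x y : G, x ≠ y → IsNilpotent (f.coeff x * f.coeff y)) := by
  have : IsAddTorsionFree G :=
    ⟨fun n hn a b hab => sub_eq_zero.1 (hG n _ hn (by simpa [nsmul_sub, sub_eq_zero] using hab))⟩
  have := TwoUniqueSums.of_isAddTorsionFree G
  exact ⟨fun hf => ⟨AddMonoidAlgebra.span_range_coeff_eq_top_of_isUnit hf,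
      fun _ _ => AddMonoidAlgebra.isNilpotent_coeff_mul_coeff_of_isUnit hf⟩,
    fun ⟨hspan, hnil⟩ => AddMonoidAlgebra.isUnit_of_span_range_coeff_eq_top hspan hnil⟩
end
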